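/- arXiv:1709.04645 — 2 statements merged into one kernel-verified Lean document; each statement's English description precedes it below -/
import Mathlib

section
/- Let Q be a graph 3-connected along a bond d, with left edge set L and right edge set R. If both graphs Q[L] and Q[R] are triangles, then (Q,d) is the special prism or has a proper special contraction minor that is the special K4. -/
open SimpleGraph

/-- An edge set `X` is connected: any two vertices covered by `X` are joined by a path
consisting of edges of `X`.  (The empty edge set counts as connected.) -/
def EdgeSetConnected {V : Type*} (X : Set (Sym2 V)) : Prop :=
  ∀ u ∈ (fromEdgeSet X).support, ∀ v ∈ (fromEdgeSet X).support, (fromEdgeSet X).Reachable u v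

/-- The subgraph `G[X]` spanned by an edge set `X`, as a graph on the covered vertices. -/
def edgeSubgraph {V : Type*} (X : Set (Sym2 V)) :
    SimpleGraph ((fromEdgeSet X).support) :=
  (fromEdgeSet X).induce (fromEdgeSet X).support

/-- The number of connected components of `G[X]`. -/
noncomputable def edgeComponents {V : Type*} (X : Set (Sym2 V)) : ℕ :=
  Nat.card (edgeSubgraph X).ConnectedComponent

/-- A graph is `k`-connected if it has more than `k` vertices and deleting fewer than `k`
vertices always leaves a connected graph. -/
def KConnected {V : Type*} (k : ℕ) (G : SimpleGraph V) : Prop :=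
  k < Nat.card V ∧ ∀ S : Set V, S.ncard < k → (G.induce Sᶜ).Connected

/-- A constraint graph: a finite simple graph `G` together with a set `X` of edges. -/
structure CGraph : Type 1 where
  V : Type
  G : SimpleGraph V
  X : Set (Sym2 V)
  fin : Finite V := by infer_instance

attribute [instance] CGraph.fin

/-- `X` really is a set of edges of `G`. -/
def CGraph.WF (C : CGraph) : Prop := C.X ⊆ C.G.edgeSet

/-- The vertex map contracting `v` onto `u`. -/
noncomputable def contractFun {V : Type*} {u v : V} (huv : u ≠ v) (x : V) : {w : V // w ≠ v} :=
  letI := Classical.decEq V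
  if h : x = v then ⟨u, huv⟩ else ⟨x, h⟩

/-- Contraction of a simple graph, identifying `v` with `u` (loops are discarded, parallel
edges are merged, so the result is simple). -/
noncomputable def contractGraph {V : Type*} (G : SimpleGraph V) {u v : V} (huv : u ≠ v) :
    SimpleGraph {w : V // w ≠ v} :=
  fromEdgeSet (Sym2.map (contractFun huv) '' G.edgeSet)

/-- Contraction of a constraint graph: identify `v` with `u`; the new constraint consists of all
non-loop images of constraint edges; thus in each parallel class edges of `X` are preferred. -/
noncomputable def CGraph.contract (C : CGraph) (u v : C.V) (huv : u ≠ v) : CGraph where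
  V := {w : C.V // w ≠ v}
  G := contractGraph C.G huv
  X := {e | e ∈ Sym2.map (contractFun huv) '' C.X ∧ ¬ e.IsDiag}

/-- Deletion of an edge from a constraint graph. -/
def CGraph.deleteEdge (C : CGraph) (e : Sym2 C.V) : CGraph where
  V := C.V
  G := C.G.deleteEdges {e}
  X := C.X

/-- One step in forming a constraint minor: delete an edge not in `X`, or contract an edge. -/
inductive CMinorStep : CGraph → CGraph → Prop
  | del (C : CGraph) (e : Sym2 C.V) (he : e ∈ C.G.edgeSet) (hx : e ∉ C.X) :
      CMinorStep C (C.deleteEdge e)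
  | contr (C : CGraph) (u v : C.V) (h : C.G.Adj u v) :
      CMinorStep C (C.contract u v h.ne)

/-- The constraint-minor relation. -/
def IsCMinor : CGraph → CGraph → Prop := Relation.ReflTransGen CMinorStep

/-- Isomorphism of constraint graphs. -/
def CGIso (C D : CGraph) : Prop :=
  ∃ φ : C.G ≃g D.G, Sym2.map (⇑φ) '' C.X = D.X

/-- The constraint `K₄`. -/
def constraintK4 : CGraph where
  V := Fin 4
  G := ⊤
  X := {s(0, 1), s(2, 3)}

def wheelGraph : SimpleGraph (Fin 5) :=
  fromEdgeSet {s(0, 1), s(1, 2), s(2, 3), s(3, 0), s(0, 4), s(1, 4), s(2, 4), s(3, 4)}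

/-- The constraint wheel. -/
def constraintWheel : CGraph where
  V := Fin 5
  G := wheelGraph
  X := {s(0, 1), s(2, 3)}

/-- The prism `K₃ □ K₂`, with triangles `{0,1,2}` and `{3,4,5}`. -/
def prismGraph : SimpleGraph (Fin 6) :=
  fromEdgeSet {s(0, 1), s(1, 2), s(0, 2), s(3, 4), s(4, 5), s(3, 5), s(0, 3), s(1, 4), s(2, 5)}

def topEdges : Set (Sym2 (Fin 6)) := {s(0, 1), s(1, 2), s(0, 2)}
def botEdges : Set (Sym2 (Fin 6)) := {s(3, 4), s(4, 5), s(3, 5)}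

/-- Constraint sets of the four constraint prisms: contained in the two triangles and meeting
every vertex, inducing a spanning connected subgraph of each triangle. -/
def PrismConstraintSet (X : Set (Sym2 (Fin 6))) : Prop :=
  X ⊆ topEdges ∪ botEdges ∧
  EdgeSetConnected (X ∩ topEdges) ∧ (fromEdgeSet (X ∩ topEdges)).support = {0, 1, 2} ∧
  EdgeSetConnected (X ∩ botEdges) ∧ (fromEdgeSet (X ∩ botEdges)).support = {3, 4, 5}

/-- `C` is one of the four constraint prisms. -/
def IsConstraintPrism (C : CGraph) : Prop :=
  ∃ X, PrismConstraintSet X ∧ CGIso C (CGraph.mk (Fin 6) prismGraph X)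

/-- The six obstructions. -/
def IsObstruction (D : CGraph) : Prop :=
  CGIso D constraintK4 ∨ CGIso D constraintWheel ∨ IsConstraintPrism D

/-- The weird prism. -/
def weirdPrism : CGraph where
  V := Fin 6
  G := prismGraph
  X := {s(0, 3), s(1, 4), s(2, 5)}

/-- The Wagner graph `V₈`. -/
def wagnerGraph : SimpleGraph (Fin 8) :=
  fromEdgeSet {s(0, 1), s(1, 2), s(2, 3), s(3, 4), s(4, 5), s(5, 6), s(6, 7), s(7, 0),
    s(0, 4), s(1, 5), s(2, 6), s(3, 7)}

/-- The constraint Wagner graph: `X` is the complement of the 6-cycle `0-1-5-4-3-7-0`. -/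
def constraintWagner : CGraph where
  V := Fin 8
  G := wagnerGraph
  X := {s(1, 2), s(2, 3), s(5, 6), s(6, 7), s(0, 4), s(2, 6)}

/-- The Wagner prism. -/
def wagnerPrism : CGraph where
  V := Fin 6
  G := prismGraph
  X := {s(0, 3), s(1, 2), s(4, 5)}

/-- `(G, X)` has a 3-connected constraint minor whose constraint is disconnected. -/
def BadMinor (C : CGraph) : Prop :=
  ∃ C', IsCMinor C C' ∧ KConnected 3 C'.G ∧ ¬ EdgeSetConnected C'.X

/-- An edge `e ∉ X` is essential if neither `(G/e, X ∩ E(G/e))` nor `(G∖e, X)` has a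
3-connected constraint minor with disconnected constraint. -/
def Essential (C : CGraph) (e : Sym2 C.V) : Prop :=
  ¬ BadMinor (C.deleteEdge e) ∧
  ∀ u v, ∀ h : C.G.Adj u v, s(u, v) = e → ¬ BadMinor (C.contract u v h.ne)

/-- An edge joining two distinct components of `G[X]`. -/
def JoinsComponents {V : Type*} (X : Set (Sym2 V)) (e : Sym2 V) : Prop :=
  ∃ a b, e = s(a, b) ∧ a ∈ (fromEdgeSet X).support ∧ b ∈ (fromEdgeSet X).support ∧
    ¬ (fromEdgeSet X).Reachable a b

/-- The degree of a vertex. -/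
noncomputable def vdeg {V : Type*} (G : SimpleGraph V) (v : V) : ℕ := (G.neighborSet v).ncard

/-- The component of `G[X]` containing the edge `f` consists of the single edge `f`. -/
def SingleEdgeComponent {V : Type*} (X : Set (Sym2 V)) (f : Sym2 V) : Prop :=
  f ∈ X ∧ ∀ g ∈ X, (∃ a ∈ f, ∃ b ∈ g, (fromEdgeSet X).Reachable a b) → g = f

/-- The edges of `Q` with all endvertices in `S`: the edges of the side `Q[S]`. -/
def sideEdges {V : Type*} (Q : SimpleGraph V) (S : Set V) : Set (Sym2 V) :=
  {e | e ∈ Q.edgeSet ∧ ∀ v ∈ e, v ∈ S}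

/-- The edges of `Q` with one endvertex in `S` and one outside `S`. -/
def crossEdges {V : Type*} (Q : SimpleGraph V) (S : Set V) : Set (Sym2 V) :=
  {e | e ∈ Q.edgeSet ∧ (∃ v ∈ e, v ∈ S) ∧ ∃ v ∈ e, v ∉ S}

/-- `d` is a bond of `Q` with sides induced by `S` and `Sᶜ`. -/
def IsBondWith {V : Type*} (Q : SimpleGraph V) (d : Set (Sym2 V)) (S : Set V) : Prop :=
  S.Nonempty ∧ Sᶜ.Nonempty ∧ (Q.induce S).Connected ∧ (Q.induce Sᶜ).Connected ∧
    d = crossEdges Q S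

/-- `Q` is 3-connected along the bond `d` (with left side `S`): `Q` is 2-connected and no pair
of vertices, one from each side, separates `Q`. -/
def ThreeConnAlong {V : Type*} (Q : SimpleGraph V) (d : Set (Sym2 V)) (S : Set V) : Prop :=
  IsBondWith Q d S ∧ KConnected 2 Q ∧
    ∀ x ∈ S, ∀ y ∈ Sᶜ, (Q.induce ({x, y}ᶜ : Set V)).Preconnected

/-- One step of a special contraction minor: contract an edge not in the bond. -/
inductive SCMStep : CGraph → CGraph → Prop
  | contr (C : CGraph) (u v : C.V) (h : C.G.Adj u v) (hd : s(u, v) ∉ C.X) :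
      SCMStep C (C.contract u v h.ne)

/-- The special-contraction-minor relation. -/
def IsSCMinor : CGraph → CGraph → Prop := Relation.ReflTransGen SCMStep

/-- A proper (non-identical) special contraction minor. -/
def IsProperSCMinor : CGraph → CGraph → Prop := Relation.TransGen SCMStep

/-- The special `K₄`: `K₄` together with a bond of size 4. -/
def specialK4 : CGraph where
  V := Fin 4
  G := ⊤
  X := {s(0, 2), s(0, 3), s(1, 2), s(1, 3)}

/-- The special prism: the prism together with the bond complementing the two triangles. -/
def specialPrism : CGraph where
  V := Fin 6
  G := prismGraph
  X := {s(0, 3), s(1, 4), s(2, 5)}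

/-- `(Q, d)` is 3-connected along `d` and both sides of `d` contain edges. -/
def GoodAlong (C : CGraph) : Prop :=
  ∃ S : Set C.V, ThreeConnAlong C.G C.X S ∧
    (sideEdges C.G S).Nonempty ∧ (sideEdges C.G Sᶜ).Nonempty

/-- `(Q, d)` is irreducible. -/
def BondIrreducible (C : CGraph) : Prop :=
  (∃ S : Set C.V, ThreeConnAlong C.G C.X S) ∧
  ¬ ∃ C', IsProperSCMinor C C' ∧ GoodAlong C'

/-- An edge set forming a triangle. -/
def IsTriangle {V : Type*} (X : Set (Sym2 V)) : Prop :=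
  ∃ a b c : V, a ≠ b ∧ a ≠ c ∧ b ≠ c ∧ X = {s(a, b), s(b, c), s(a, c)}

/-- An edge set consisting of a single edge. -/
def IsSingleEdge {V : Type*} (X : Set (Sym2 V)) : Prop :=
  ∃ a b : V, a ≠ b ∧ X = {s(a, b)}

/-- `M` is (isomorphic to) the cycle matroid of `G`, via the bijection `f` between the ground
set of `M` and the edges of `G`: a set is independent iff its image is a forest. -/
def IsGraphicRep {α : Type} (M : Matroid α) {V : Type} (G : SimpleGraph V)
    (f : α → Sym2 V) : Prop :=
  Set.BijOn f M.E G.edgeSet ∧ ∀ I ⊆ M.E, (M.Indep I ↔ (fromEdgeSet (f '' I)).IsAcyclic)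

/-- The constraint matroid `(M, X)` is realisable. -/
def Realisable {α : Type} (M : Matroid α) (X : Set α) : Prop :=
  ∃ (V : Type) (_ : Finite V) (G : SimpleGraph V) (f : α → Sym2 V),
    IsGraphicRep M G f ∧ EdgeSetConnected (f '' X)

/-- Deletion of a set of elements from a matroid. -/
def Matroid.del {α : Type} (M : Matroid α) (D : Set α) : Matroid α := Matroid.restrict M (M.E \ D)

/-- Contraction of a set of elements of a matroid. -/
def Matroid.con {α : Type} (M : Matroid α) (C : Set α) : Matroid α :=
  Matroid.dual (Matroid.del (Matroid.dual M) C)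

/-- `(N, Y)` is a constraint minor of `(M, X)`: contract an arbitrary set `C` and delete a
set `D` of elements not in `X`. -/
def MatroidCMinor {α : Type} (M : Matroid α) (X : Set α) (N : Matroid α) (Y : Set α) : Prop :=
  ∃ C D : Set α, D ⊆ M.E \ X ∧ N = (M.con C).del D ∧ Y = X \ C

/-- `(N, Y)` is isomorphic, via the cycle matroid, to one of the six obstructions. -/
def MatroidObstruction {α : Type} (N : Matroid α) (Y : Set α) : Prop :=
  (∃ f : α → Sym2 (Fin 4), IsGraphicRep N constraintK4.G f ∧ f '' Y = constraintK4.X) ∨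
  (∃ f : α → Sym2 (Fin 5), IsGraphicRep N constraintWheel.G f ∧ f '' Y = constraintWheel.X) ∨
  (∃ X, PrismConstraintSet X ∧
    ∃ f : α → Sym2 (Fin 6), IsGraphicRep N prismGraph f ∧ f '' Y = X)

section Helpers
variable {α : Type*}

private lemma third3 {x y z q r : α} (hxy : x ≠ y) (hxz : x ≠ z) (hyz : y ≠ z)
    (hq : q = x ∨ q = y ∨ q = z) (hr : r = x ∨ r = y ∨ r = z) (hqr : q ≠ r) :
    ∃ t, (t = x ∨ t = y ∨ t = z) ∧ t ≠ q ∧ t ≠ r ∧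
      ∀ w, (w = x ∨ w = y ∨ w = z) → w = q ∨ w = r ∨ w = t := by
  rcases hq with rfl | rfl | rfl <;> rcases hr with rfl | rfl | rfl
  · exact absurd rfl hqr
  · exact ⟨z, Or.inr (Or.inr rfl), hxz.symm, hyz.symm, fun w hw => by tauto⟩
  · exact ⟨y, Or.inr (Or.inl rfl), hxy.symm, hyz, fun w hw => by tauto⟩
  · exact ⟨z, Or.inr (Or.inr rfl), hyz.symm, hxz.symm, fun w hw => by tauto⟩
  · exact absurd rfl hqr
  · exact ⟨x, Or.inl rfl, hxy, hxz, fun w hw => by tauto⟩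
  · exact ⟨y, Or.inr (Or.inl rfl), hyz, hxy.symm, fun w hw => by tauto⟩
  · exact ⟨x, Or.inl rfl, hxz, hxy, fun w hw => by tauto⟩
  · exact absurd rfl hqr

private lemma other2 {x y z p : α} (hxy : x ≠ y) (hxz : x ≠ z) (hyz : y ≠ z)
    (hp : p = x ∨ p = y ∨ p = z) :
    ∃ s1 s2, (s1 = x ∨ s1 = y ∨ s1 = z) ∧ (s2 = x ∨ s2 = y ∨ s2 = z) ∧
      p ≠ s1 ∧ p ≠ s2 ∧ s1 ≠ s2 ∧
      ∀ w, (w = x ∨ w = y ∨ w = z) → w = p ∨ w = s1 ∨ w = s2 := by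
  rcases hp with rfl | rfl | rfl
  · exact ⟨y, z, by tauto, by tauto, hxy, hxz, hyz, fun w hw => by tauto⟩
  · exact ⟨x, z, by tauto, by tauto, hxy.symm, hyz, hxz, fun w hw => by tauto⟩
  · exact ⟨x, y, by tauto, by tauto, hxz.symm, hyz.symm, hxy, fun w hw => by tauto⟩

private lemma exhaust3 {x y z p q r : α}
    (hp : p = x ∨ p = y ∨ p = z) (hq : q = x ∨ q = y ∨ q = z) (hr : r = x ∨ r = y ∨ r = z)
    (hpq : p ≠ q) (hpr : p ≠ r) (hqr : q ≠ r) :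
    ∀ v, (v = x ∨ v = y ∨ v = z) → v = p ∨ v = q ∨ v = r := by
  intro v hv
  rcases hv with rfl | rfl | rfl <;> rcases hp with rfl | rfl | rfl <;>
    rcases hq with rfl | rfl | rfl <;> rcases hr with rfl | rfl | rfl <;> tauto

private lemma side_structure {V : Type*} {G : SimpleGraph V} {T : Set V} {a b c : V}
    (hconn : (G.induce T).Connected)
    (htri : sideEdges G T = {s(a, b), s(b, c), s(a, c)}) :
    a ∈ T ∧ b ∈ T ∧ c ∈ T ∧ G.Adj a b ∧ G.Adj b c ∧ G.Adj a c ∧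
      ∀ v ∈ T, v = a ∨ v = b ∨ v = c := by
  have hab : s(a, b) ∈ sideEdges G T := by rw [htri]; left; rfl
  have hbc : s(b, c) ∈ sideEdges G T := by rw [htri]; right; left; rfl
  have hac : s(a, c) ∈ sideEdges G T := by rw [htri]; right; right; rfl
  have haT : a ∈ T := hab.2 a (Sym2.mem_mk_left a b)
  have hbT : b ∈ T := hab.2 b (Sym2.mem_mk_right a b)
  have hcT : c ∈ T := hac.2 c (Sym2.mem_mk_right a c)
  refine ⟨haT, hbT, hcT, hab.1, hbc.1, hac.1, ?_⟩
  intro v hv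
  by_contra hcon
  push_neg at hcon
  obtain ⟨hva, hvb, hvc⟩ := hcon
  obtain ⟨w⟩ := hconn.preconnected ⟨v, hv⟩ ⟨a, haT⟩
  obtain ⟨d, hd, hdS, hdnS⟩ := w.exists_boundary_dart {⟨v, hv⟩}
    (Set.mem_singleton _) (by simp only [Set.mem_singleton_iff, Subtype.ext_iff]; exact fun h => hva h.symm)
  have hadj : G.Adj v d.snd.val := by
    have := d.adj
    rw [Set.mem_singleton_iff] at hdS
    rw [hdS] at this
    exact this
  have hmem : s(v, (d.snd : V)) ∈ sideEdges G T :=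
    ⟨G.mem_edgeSet.mpr hadj, by
      intro w hw
      rcases Sym2.mem_iff.mp hw with rfl | rfl
      · exact hv
      · exact d.snd.2⟩
  rw [htri] at hmem
  simp only [Set.mem_insert_iff, Set.mem_singleton_iff, Sym2.eq_iff] at hmem
  tauto

private lemma cover_lemma {V : Type*} {G : SimpleGraph V} {S : Set V}
    (hsep : ∀ x ∈ S, ∀ y ∈ Sᶜ, (G.induce ({x, y}ᶜ : Set V)).Preconnected)
    {u v p0 q0 : V} (hu : u ∈ S) (hv : v ∉ S)
    (hp0 : p0 ∈ S) (hq0 : q0 ∉ S) (hp0u : p0 ≠ u) (hq0v : q0 ≠ v) :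
    ∃ p q, p ∈ S ∧ p ≠ u ∧ q ∉ S ∧ q ≠ v ∧ G.Adj p q := by
  have hp0m : p0 ∈ ({u, v}ᶜ : Set V) := by
    simp only [Set.mem_compl_iff, Set.mem_insert_iff, Set.mem_singleton_iff]
    push_neg
    exact ⟨hp0u, fun h => hv (h ▸ hp0)⟩
  have hq0m : q0 ∈ ({u, v}ᶜ : Set V) := by
    simp only [Set.mem_compl_iff, Set.mem_insert_iff, Set.mem_singleton_iff]
    push_neg
    exact ⟨fun h => hq0 (h ▸ hu), hq0v⟩
  obtain ⟨w⟩ := hsep u hu v hv ⟨p0, hp0m⟩ ⟨q0, hq0m⟩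
  obtain ⟨d, -, hdS, hdnS⟩ := w.exists_boundary_dart {w | (w : V) ∈ S} hp0 hq0
  refine ⟨d.fst.val, d.snd.val, hdS, ?_, hdnS, ?_, d.adj⟩
  · have := d.fst.2
    simp only [Set.mem_compl_iff, Set.mem_insert_iff, Set.mem_singleton_iff] at this
    push_neg at this
    exact this.1
  · have := d.snd.2
    simp only [Set.mem_compl_iff, Set.mem_insert_iff, Set.mem_singleton_iff] at this
    push_neg at this
    exact this.2

end Helpers


private def pick4 {V : Type*} [DecidableEq V] (a b c d : V) (v : V) : Fin 4 :=
  if v = a then 0 else if v = b then 1 else if v = c then 2 else 3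

private def pick6 {V : Type*} [DecidableEq V] (a b c x y z : V) (v : V) : Fin 6 :=
  if v = a then 0 else if v = b then 1 else if v = c then 2 else
  if v = x then 3 else if v = y then 4 else 5

private lemma cgiso_k4 (D : CGraph) (A B X Y : D.V)
    (hexh : ∀ w, w = A ∨ w = B ∨ w = X ∨ w = Y)
    (nAB : A ≠ B) (nAX : A ≠ X) (nAY : A ≠ Y) (nBX : B ≠ X) (nBY : B ≠ Y) (nXY : X ≠ Y)
    (adjAB : D.G.Adj A B) (adjAX : D.G.Adj A X) (adjAY : D.G.Adj A Y)
    (adjBX : D.G.Adj B X) (adjBY : D.G.Adj B Y) (adjXY : D.G.Adj X Y)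
    (hDX : D.X = {s(A, X), s(A, Y), s(B, X), s(B, Y)}) :
    CGIso D specialK4 := by
  classical
  set f : D.V → Fin 4 := pick4 A B X Y with hf
  set g : Fin 4 → D.V := ![A, B, X, Y] with hg
  have hfA : f A = 0 := by simp [hf, pick4]
  have hfB : f B = 1 := by simp [hf, pick4, nAB.symm]
  have hfX : f X = 2 := by simp [hf, pick4, nAX.symm, nBX.symm]
  have hfY : f Y = 3 := by simp [hf, pick4, nAY.symm, nBY.symm, nXY.symm]
  have hgf : Function.LeftInverse g f := by
    intro w
    rcases hexh w with rfl | rfl | rfl | rfl <;>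
      simp only [hfA, hfB, hfX, hfY, hg] <;> rfl
  have hfg : Function.RightInverse g f := by
    intro i
    fin_cases i <;> simp only [hg] <;>
      first | exact hfA | exact hfB | exact hfX | exact hfY
  have hadj : ∀ u v : D.V, D.G.Adj u v ↔ u ≠ v := by
    intro u v
    constructor
    · exact fun h => h.ne
    · intro hne
      rcases hexh u with rfl | rfl | rfl | rfl <;> rcases hexh v with rfl | rfl | rfl | rfl <;>
        first
          | exact absurd rfl hne
          | exact adjAB | exact adjAB.symm | exact adjAX | exact adjAX.symm
          | exact adjAY | exact adjAY.symm | exact adjBX | exact adjBX.symm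
          | exact adjBY | exact adjBY.symm | exact adjXY | exact adjXY.symm
  have hinj : Function.Injective f := hgf.injective
  refine ⟨⟨⟨f, g, hgf, hfg⟩, ?_⟩, ?_⟩
  · intro u v
    show (⊤ : SimpleGraph (Fin 4)).Adj (f u) (f v) ↔ D.G.Adj u v
    rw [hadj, SimpleGraph.top_adj]
    exact ⟨fun h h' => h (by rw [h']), fun h h' => h (hinj h')⟩
  · show Sym2.map f '' D.X = specialK4.X
    rw [hDX]
    simp only [Set.image_insert_eq, Set.image_singleton, Sym2.map_pair_eq,
      hfA, hfB, hfX, hfY]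
    rfl

private lemma cgiso_prism (C : CGraph) (a b c x y z : C.V)
    (hab : a ≠ b) (hac : a ≠ c) (hbc : b ≠ c)
    (hxy : x ≠ y) (hxz : x ≠ z) (hyz : y ≠ z)
    (hax : a ≠ x) (hay : a ≠ y) (haz : a ≠ z)
    (hbx : b ≠ x) (hby : b ≠ y) (hbz : b ≠ z)
    (hcx : c ≠ x) (hcy : c ≠ y) (hcz : c ≠ z)
    (hexh : ∀ v, v = a ∨ v = b ∨ v = c ∨ v = x ∨ v = y ∨ v = z)
    (hAB : C.G.Adj a b) (hAC : C.G.Adj a c) (hBC : C.G.Adj b c)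
    (hXY : C.G.Adj x y) (hXZ : C.G.Adj x z) (hYZ : C.G.Adj y z)
    (hAX : C.G.Adj a x) (hBY : C.G.Adj b y) (hCZ : C.G.Adj c z)
    (nay : ¬ C.G.Adj a y) (naz : ¬ C.G.Adj a z) (nbx : ¬ C.G.Adj b x)
    (nbz : ¬ C.G.Adj b z) (ncx : ¬ C.G.Adj c x) (ncy : ¬ C.G.Adj c y)
    (hCX : C.X = {s(a, x), s(b, y), s(c, z)}) :
    CGIso C specialPrism := by
  classical
  set f : C.V → Fin 6 := pick6 a b c x y z with hf
  set g : Fin 6 → C.V := ![a, b, c, x, y, z] with hg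
  have hfa : f a = 0 := by simp [hf, pick6]
  have hfb : f b = 1 := by simp [hf, pick6, hab.symm]
  have hfc : f c = 2 := by simp [hf, pick6, hac.symm, hbc.symm]
  have hfx : f x = 3 := by simp [hf, pick6, hax.symm, hbx.symm, hcx.symm]
  have hfy : f y = 4 := by simp [hf, pick6, hay.symm, hby.symm, hcy.symm, hxy.symm]
  have hfz : f z = 5 := by simp [hf, pick6, haz.symm, hbz.symm, hcz.symm, hxz.symm, hyz.symm]
  have hgf : Function.LeftInverse g f := by
    intro w
    rcases hexh w with rfl | rfl | rfl | rfl | rfl | rfl <;>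
      simp only [hfa, hfb, hfc, hfx, hfy, hfz, hg] <;> rfl
  have hfg : Function.RightInverse g f := by
    intro i
    fin_cases i <;> simp only [hg] <;>
      first | exact hfa | exact hfb | exact hfc | exact hfx | exact hfy | exact hfz
  have hP2 : ∀ i j : Fin 6, prismGraph.Adj i j ↔
      ((i = 0 ∧ j = 1 ∨ i = 1 ∧ j = 0) ∨ (i = 1 ∧ j = 2 ∨ i = 2 ∧ j = 1) ∨
       (i = 0 ∧ j = 2 ∨ i = 2 ∧ j = 0) ∨ (i = 3 ∧ j = 4 ∨ i = 4 ∧ j = 3) ∨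
       (i = 4 ∧ j = 5 ∨ i = 5 ∧ j = 4) ∨ (i = 3 ∧ j = 5 ∨ i = 5 ∧ j = 3) ∨
       (i = 0 ∧ j = 3 ∨ i = 3 ∧ j = 0) ∨ (i = 1 ∧ j = 4 ∨ i = 4 ∧ j = 1) ∨
       (i = 2 ∧ j = 5 ∨ i = 5 ∧ j = 2)) ∧ i ≠ j := by
    intro i j
    rw [prismGraph, SimpleGraph.fromEdgeSet_adj]
    simp only [Set.mem_insert_iff, Set.mem_singleton_iff, Sym2.eq_iff]
  refine ⟨⟨⟨f, g, hgf, hfg⟩, ?_⟩, ?_⟩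
  · intro u v
    show prismGraph.Adj (f u) (f v) ↔ C.G.Adj u v
    rcases hexh u with rfl | rfl | rfl | rfl | rfl | rfl <;>
      rcases hexh v with rfl | rfl | rfl | rfl | rfl | rfl <;>
        simp only [hfa, hfb, hfc, hfx, hfy, hfz] <;> rw [hP2] <;>
          first
            | exact iff_of_false (by decide) (C.G.irrefl)
            | exact iff_of_true (by decide) hAB
            | exact iff_of_true (by decide) hAB.symm
            | exact iff_of_true (by decide) hAC
            | exact iff_of_true (by decide) hAC.symm
            | exact iff_of_true (by decide) hBC
            | exact iff_of_true (by decide) hBC.symm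
            | exact iff_of_true (by decide) hXY
            | exact iff_of_true (by decide) hXY.symm
            | exact iff_of_true (by decide) hXZ
            | exact iff_of_true (by decide) hXZ.symm
            | exact iff_of_true (by decide) hYZ
            | exact iff_of_true (by decide) hYZ.symm
            | exact iff_of_true (by decide) hAX
            | exact iff_of_true (by decide) hAX.symm
            | exact iff_of_true (by decide) hBY
            | exact iff_of_true (by decide) hBY.symm
            | exact iff_of_true (by decide) hCZ
            | exact iff_of_true (by decide) hCZ.symm
            | exact iff_of_false (by decide) nay
            | exact iff_of_false (by decide) (fun h => nay h.symm)
            | exact iff_of_false (by decide) naz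
            | exact iff_of_false (by decide) (fun h => naz h.symm)
            | exact iff_of_false (by decide) nbx
            | exact iff_of_false (by decide) (fun h => nbx h.symm)
            | exact iff_of_false (by decide) nbz
            | exact iff_of_false (by decide) (fun h => nbz h.symm)
            | exact iff_of_false (by decide) ncx
            | exact iff_of_false (by decide) (fun h => ncx h.symm)
            | exact iff_of_false (by decide) ncy
            | exact iff_of_false (by decide) (fun h => ncy h.symm)
  · show Sym2.map f '' C.X = specialPrism.X
    rw [hCX]
    simp only [Set.image_insert_eq, Set.image_singleton, Sym2.map_pair_eq,
      hfa, hfb, hfc, hfx, hfy, hfz]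
    rfl


set_option maxHeartbeats 1000000 in
private lemma core_k4 (C : CGraph) (S : Set C.V) (a b c x y z : C.V)
    (hab : a ≠ b) (hac : a ≠ c) (hbc : b ≠ c)
    (hxy : x ≠ y) (hxz : x ≠ z) (hyz : y ≠ z)
    (haS : a ∈ S) (hbS : b ∈ S) (hcS : c ∈ S)
    (hxS : x ∉ S) (hyS : y ∉ S) (hzS : z ∉ S)
    (hS : ∀ v ∈ S, v = a ∨ v = b ∨ v = c)
    (hSc : ∀ v, v ∉ S → v = x ∨ v = y ∨ v = z)
    (hAB : C.G.Adj a b) (hBC : C.G.Adj b c) (hXY : C.G.Adj x y) (hYZ : C.G.Adj y z)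
    (hX : ∀ e, e ∈ C.X ↔ ∃ u v, u ∈ S ∧ v ∉ S ∧ C.G.Adj u v ∧ e = s(u, v))
    (h1 : C.G.Adj a x) (h2 : C.G.Adj a y ∨ C.G.Adj a z)
    (h3 : C.G.Adj b x ∨ C.G.Adj c x)
    (h4 : C.G.Adj b y ∨ C.G.Adj b z ∨ C.G.Adj c y ∨ C.G.Adj c z) :
    ∃ C', IsProperSCMinor C C' ∧ CGIso C' specialK4 := by
  classical
  have hax : a ≠ x := fun h => hxS (h ▸ haS)
  have hay : a ≠ y := fun h => hyS (h ▸ haS)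
  have haz : a ≠ z := fun h => hzS (h ▸ haS)
  have hbx : b ≠ x := fun h => hxS (h ▸ hbS)
  have hby : b ≠ y := fun h => hyS (h ▸ hbS)
  have hbz : b ≠ z := fun h => hzS (h ▸ hbS)
  have hxc : x ≠ c := fun h => hxS (h ▸ hcS)
  have hyc : y ≠ c := fun h => hyS (h ▸ hcS)
  have hzc : z ≠ c := fun h => hzS (h ▸ hcS)
  -- evaluation of the first contraction map
  have k1 : ∀ (w : C.V) (hw : w ≠ c), contractFun hBC.ne w = ⟨w, hw⟩ := by
    intro w hw; unfold contractFun; exact dif_neg hw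
  have k1c : contractFun hBC.ne c = ⟨b, hBC.ne⟩ := by
    unfold contractFun; exact dif_pos rfl
  -- s(b,c) is not a constraint edge
  have hbcX : s(b, c) ∉ C.X := by
    intro hmem
    obtain ⟨u, v, huS, hvS, -, heq⟩ := (hX _).mp hmem
    rcases Sym2.eq_iff.mp heq with ⟨h1', h2'⟩ | ⟨h1', h2'⟩
    · exact hvS (h2' ▸ hcS)
    · exact hvS (h1' ▸ hbS)
  -- adjacency of y,z in the contracted graph
  have hYZ1 : (C.contract b c hBC.ne).G.Adj ⟨y, hyc⟩ ⟨z, hzc⟩ := by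
    refine (SimpleGraph.fromEdgeSet_adj _).mpr ⟨⟨s(y, z), C.G.mem_edgeSet.mpr hYZ, ?_⟩, ?_⟩
    · rw [Sym2.map_pair_eq, k1 y hyc, k1 z hzc]
      try rfl
    · exact fun h => hyz (congrArg Subtype.val h)

  -- values of the first contraction on S
  have hval1 : ∀ u ∈ S, (contractFun hBC.ne u).val = a ∨ (contractFun hBC.ne u).val = b := by
    intro u hu
    rcases hS u hu with rfl | rfl | rfl
    · left; rw [k1 u hac]
    · right; rw [k1 u hbc]
    · right; rw [k1c]
  -- the contracted y-z edge is not a constraint edge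
  have hyzX : s((⟨y, hyc⟩ : {w : C.V // w ≠ c}), ⟨z, hzc⟩) ∉ (C.contract b c hBC.ne).X := by
    rintro ⟨⟨e0, he0, heq⟩, -⟩
    obtain ⟨u, v, huS, hvS, -, rfl⟩ := (hX e0).mp he0
    rw [Sym2.map_pair_eq, Sym2.eq_iff] at heq
    rcases heq with ⟨h1', -⟩ | ⟨h1', -⟩
    · have hv' := congrArg Subtype.val h1'
      rcases hval1 u huS with he | he <;> rw [he] at hv'
      · exact hyS ((show a = y from hv') ▸ haS)
      · exact hyS ((show b = y from hv') ▸ hbS)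
    · have hv' := congrArg Subtype.val h1'
      rcases hval1 u huS with he | he <;> rw [he] at hv'
      · exact hzS ((show a = z from hv') ▸ haS)
      · exact hzS ((show b = z from hv') ▸ hbS)
  -- evaluation of the second contraction map
  have k2 : ∀ (w : {w : C.V // w ≠ c}) (hw : w ≠ ⟨z, hzc⟩), contractFun hYZ1.ne w = ⟨w, hw⟩ := by
    intro w hw; unfold contractFun; exact dif_neg hw
  have k2z : contractFun hYZ1.ne ⟨z, hzc⟩ = ⟨⟨y, hyc⟩, hYZ1.ne⟩ := by
    unfold contractFun; exact dif_pos rfl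
  -- composite projection values
  have pval : ∀ (w : C.V) (h1' : w ≠ c) (h2' : w ≠ z),
      contractFun hYZ1.ne (contractFun hBC.ne w) =
        ⟨⟨w, h1'⟩, fun h => h2' (congrArg Subtype.val h)⟩ := by
    intro w h1' h2'
    rw [k1 w h1', k2 ⟨w, h1'⟩ (fun h => h2' (congrArg Subtype.val h))]
  have pc : contractFun hYZ1.ne (contractFun hBC.ne c) =
      ⟨⟨b, hbc⟩, fun h => hbz (congrArg Subtype.val h)⟩ := by
    rw [k1c, k2 ⟨b, hBC.ne⟩ (fun h => hbz (congrArg Subtype.val h))]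
  have pz : contractFun hYZ1.ne (contractFun hBC.ne z) =
      ⟨⟨y, hyc⟩, fun h => hyz (congrArg Subtype.val h)⟩ := by
    rw [k1 z hzc, k2z]
  -- the doubly contracted graph
  have adjD2 : ∀ u v : C.V, C.G.Adj u v →
      contractFun hYZ1.ne (contractFun hBC.ne u) ≠ contractFun hYZ1.ne (contractFun hBC.ne v) →
      ((C.contract b c hBC.ne).contract ⟨y, hyc⟩ ⟨z, hzc⟩ hYZ1.ne).G.Adj
        (contractFun hYZ1.ne (contractFun hBC.ne u))
        (contractFun hYZ1.ne (contractFun hBC.ne v)) := by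
    intro u v huv hne
    refine (SimpleGraph.fromEdgeSet_adj _).mpr ⟨?_, hne⟩
    refine ⟨s(contractFun hBC.ne u, contractFun hBC.ne v), ?_, Sym2.map_pair_eq _ _ _⟩
    refine (SimpleGraph.mem_edgeSet _).mpr ?_
    refine (SimpleGraph.fromEdgeSet_adj _).mpr
      ⟨?_, fun h => hne (congrArg (contractFun hYZ1.ne) h)⟩
    exact ⟨s(u, v), C.G.mem_edgeSet.mpr huv, Sym2.map_pair_eq _ _ _⟩
  refine ⟨(C.contract b c hBC.ne).contract ⟨y, hyc⟩ ⟨z, hzc⟩ hYZ1.ne,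
    Relation.TransGen.head (SCMStep.contr C b c hBC hbcX)
      (Relation.TransGen.single (SCMStep.contr (C.contract b c hBC.ne) ⟨y, hyc⟩ ⟨z, hzc⟩ hYZ1 hyzX)), ?_⟩
  -- now build the CGIso with specialK4
  refine cgiso_k4 ((C.contract b c hBC.ne).contract ⟨y, hyc⟩ ⟨z, hzc⟩ hYZ1.ne) ⟨⟨a, hac⟩, fun h => haz (congrArg Subtype.val h)⟩
    ⟨⟨b, hbc⟩, fun h => hbz (congrArg Subtype.val h)⟩
    ⟨⟨x, hxc⟩, fun h => hxz (congrArg Subtype.val h)⟩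
    ⟨⟨y, hyc⟩, fun h => hyz (congrArg Subtype.val h)⟩
    ?_ ?_ ?_ ?_ ?_ ?_ ?_ ?_ ?_ ?_ ?_ ?_ ?_ ?_
  · -- exhaustion
    rintro ⟨⟨w, hwc⟩, hwz⟩
    have hwz' : w ≠ z := fun h => hwz (Subtype.ext h)
    by_cases hwS : w ∈ S
    · rcases hS w hwS with rfl | rfl | rfl
      · exact Or.inl (Subtype.ext (Subtype.ext rfl))
      · exact Or.inr (Or.inl (Subtype.ext (Subtype.ext rfl)))
      · exact absurd rfl hwc
    · rcases hSc w hwS with rfl | rfl | rfl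
      · exact Or.inr (Or.inr (Or.inl (Subtype.ext (Subtype.ext rfl))))
      · exact Or.inr (Or.inr (Or.inr (Subtype.ext (Subtype.ext rfl))))
      · exact absurd rfl hwz'
  · exact fun h => hab (congrArg Subtype.val (congrArg Subtype.val h))
  · exact fun h => hax (congrArg Subtype.val (congrArg Subtype.val h))
  · exact fun h => hay (congrArg Subtype.val (congrArg Subtype.val h))
  · exact fun h => hbx (congrArg Subtype.val (congrArg Subtype.val h))
  · exact fun h => hby (congrArg Subtype.val (congrArg Subtype.val h))
  · exact fun h => hxy (congrArg Subtype.val (congrArg Subtype.val h))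
  · -- A-B
    have := adjD2 a b hAB (by
      rw [pval a hac haz, pval b hbc hbz]
      exact fun h => hab (congrArg Subtype.val (congrArg Subtype.val h)))
    rwa [pval a hac haz, pval b hbc hbz] at this
  · -- A-X
    have := adjD2 a x h1 (by
      rw [pval a hac haz, pval x hxc hxz]
      exact fun h => hax (congrArg Subtype.val (congrArg Subtype.val h)))
    rwa [pval a hac haz, pval x hxc hxz] at this
  · -- A-Y
    rcases h2 with h | h
    · have := adjD2 a y h (by
        rw [pval a hac haz, pval y hyc hyz]
        exact fun h' => hay (congrArg Subtype.val (congrArg Subtype.val h')))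
      rwa [pval a hac haz, pval y hyc hyz] at this
    · have := adjD2 a z h (by
        rw [pval a hac haz, pz]
        exact fun h' => hay (congrArg Subtype.val (congrArg Subtype.val h')))
      rwa [pval a hac haz, pz] at this
  · -- B-X
    rcases h3 with h | h
    · have := adjD2 b x h (by
        rw [pval b hbc hbz, pval x hxc hxz]
        exact fun h' => hbx (congrArg Subtype.val (congrArg Subtype.val h')))
      rwa [pval b hbc hbz, pval x hxc hxz] at this
    · have := adjD2 c x h (by
        rw [pc, pval x hxc hxz]
        exact fun h' => hbx (congrArg Subtype.val (congrArg Subtype.val h')))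
      rwa [pc, pval x hxc hxz] at this
  · -- B-Y
    rcases h4 with h | h | h | h
    · have := adjD2 b y h (by
        rw [pval b hbc hbz, pval y hyc hyz]
        exact fun h' => hby (congrArg Subtype.val (congrArg Subtype.val h')))
      rwa [pval b hbc hbz, pval y hyc hyz] at this
    · have := adjD2 b z h (by
        rw [pval b hbc hbz, pz]
        exact fun h' => hby (congrArg Subtype.val (congrArg Subtype.val h')))
      rwa [pval b hbc hbz, pz] at this
    · have := adjD2 c y h (by
        rw [pc, pval y hyc hyz]
        exact fun h' => hby (congrArg Subtype.val (congrArg Subtype.val h')))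
      rwa [pc, pval y hyc hyz] at this
    · have := adjD2 c z h (by
        rw [pc, pz]
        exact fun h' => hby (congrArg Subtype.val (congrArg Subtype.val h')))
      rwa [pc, pz] at this
  · -- X-Y
    have := adjD2 x y hXY (by
      rw [pval x hxc hxz, pval y hyc hyz]
      exact fun h => hxy (congrArg Subtype.val (congrArg Subtype.val h)))
    rwa [pval x hxc hxz, pval y hyc hyz] at this
  · -- the constraint set of the double contraction
    apply Set.ext
    intro e
    constructor
    · rintro ⟨⟨e1, ⟨⟨e0, he0, rfl⟩, -⟩, rfl⟩, -⟩
      obtain ⟨u, v, huS, hvS, -, rfl⟩ := (hX e0).mp he0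
      erw [Sym2.map_pair_eq]
      show _ = _ ∨ _ = _ ∨ _ = _ ∨ _ = _
      have hu' : contractFun hYZ1.ne (contractFun hBC.ne u) =
          (⟨⟨a, hac⟩, fun h => haz (congrArg Subtype.val h)⟩ :
            {w : {w : C.V // w ≠ c} // w ≠ ⟨z, hzc⟩}) ∨
          contractFun hYZ1.ne (contractFun hBC.ne u) =
          ⟨⟨b, hbc⟩, fun h => hbz (congrArg Subtype.val h)⟩ := by
        rcases hS u huS with rfl | rfl | rfl
        · left; exact pval u hac haz
        · right; rw [pval u hbc hbz]
        · right; rw [pc]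
      have hv' : contractFun hYZ1.ne (contractFun hBC.ne v) =
          (⟨⟨x, hxc⟩, fun h => hxz (congrArg Subtype.val h)⟩ :
            {w : {w : C.V // w ≠ c} // w ≠ ⟨z, hzc⟩}) ∨
          contractFun hYZ1.ne (contractFun hBC.ne v) =
          ⟨⟨y, hyc⟩, fun h => hyz (congrArg Subtype.val h)⟩ := by
        rcases hSc v hvS with rfl | rfl | rfl
        · left; exact pval v hxc hxz
        · right; rw [pval v hyc hyz]
        · right; rw [pz]
      rcases hu' with hu' | hu' <;> rcases hv' with hv' | hv' <;> rw [hu', hv']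
      · exact Or.inl rfl
      · exact Or.inr (Or.inl rfl)
      · exact Or.inr (Or.inr (Or.inl rfl))
      · exact Or.inr (Or.inr (Or.inr rfl))
    · intro he
      simp only [Set.mem_insert_iff, Set.mem_singleton_iff] at he
      have base : ∀ (u v : C.V), C.G.Adj u v → u ∈ S → v ∉ S →
          Sym2.map (contractFun hBC.ne) s(u, v) ∈ (C.contract b c hBC.ne).X := by
        intro u v huv hu hv
        refine ⟨⟨s(u, v), (hX _).mpr ⟨u, v, hu, hv, huv, rfl⟩, rfl⟩, ?_⟩
        rw [Sym2.map_pair_eq, Sym2.mk_isDiag_iff]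
        intro heq
        have hvc : v ≠ c := fun h => hv (h ▸ hcS)
        have hv1 := congrArg Subtype.val heq
        rw [k1 v hvc] at hv1
        rcases hval1 u hu with he' | he' <;> rw [he'] at hv1
        · exact hv ((show a = v from hv1) ▸ haS)
        · exact hv ((show b = v from hv1) ▸ hbS)
      have step : ∀ (u v : C.V), C.G.Adj u v → u ∈ S → v ∉ S →
          Sym2.map (contractFun hYZ1.ne) (Sym2.map (contractFun hBC.ne) s(u, v)) ∈
            ((C.contract b c hBC.ne).contract ⟨y, hyc⟩ ⟨z, hzc⟩ hYZ1.ne).X := by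
        intro u v huv hu hv
        refine ⟨⟨Sym2.map (contractFun hBC.ne) s(u, v), base u v huv hu hv, rfl⟩, ?_⟩
        erw [Sym2.map_pair_eq, Sym2.mk_isDiag_iff]
        intro heq
        have hv2 := congrArg Subtype.val (congrArg Subtype.val heq)
        have hu' : (contractFun hYZ1.ne (contractFun hBC.ne u)).val.val = a ∨
            (contractFun hYZ1.ne (contractFun hBC.ne u)).val.val = b := by
          rcases hS u hu with rfl | rfl | rfl
          · left; rw [pval u hac haz]
          · right; rw [pval u hbc hbz]
          · right; rw [pc]
        have hv' : (contractFun hYZ1.ne (contractFun hBC.ne v)).val.val = x ∨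
            (contractFun hYZ1.ne (contractFun hBC.ne v)).val.val = y := by
          rcases hSc v hv with rfl | rfl | rfl
          · left; rw [pval v hxc hxz]
          · right; rw [pval v hyc hyz]
          · right; rw [pz]
        rcases hu' with he' | he' <;> rcases hv' with he'' | he'' <;>
          rw [he', he''] at hv2
        · exact hax hv2
        · exact hay hv2
        · exact hbx hv2
        · exact hby hv2
      rcases he with rfl | rfl | rfl | rfl
      · have := step a x h1 haS hxS
        erw [Sym2.map_pair_eq, pval a hac haz, pval x hxc hxz] at this; exact this
      · rcases h2 with h | h
        · have := step a y h haS hyS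
          erw [Sym2.map_pair_eq, pval a hac haz, pval y hyc hyz] at this; exact this
        · have := step a z h haS hzS
          erw [Sym2.map_pair_eq, pval a hac haz, pz] at this; exact this
      · rcases h3 with h | h
        · have := step b x h hbS hxS
          erw [Sym2.map_pair_eq, pval b hbc hbz, pval x hxc hxz] at this; exact this
        · have := step c x h hcS hxS
          erw [Sym2.map_pair_eq, pc, pval x hxc hxz] at this; exact this
      · rcases h4 with h | h | h | h
        · have := step b y h hbS hyS
          erw [Sym2.map_pair_eq, pval b hbc hbz, pval y hyc hyz] at this; exact this
        · have := step b z h hbS hzS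
          erw [Sym2.map_pair_eq, pval b hbc hbz, pz] at this; exact this
        · have := step c y h hcS hyS
          erw [Sym2.map_pair_eq, pc, pval y hyc hyz] at this; exact this
        · have := step c z h hcS hzS
          erw [Sym2.map_pair_eq, pc, pz] at this; exact this


set_option maxHeartbeats 1000000 in
private lemma k4_case (C : CGraph) (S : Set C.V) (a0 b0 c0 x0 y0 z0 : C.V)
    (hd1 : a0 ≠ b0) (hd2 : a0 ≠ c0) (hd3 : b0 ≠ c0)
    (hd4 : x0 ≠ y0) (hd5 : x0 ≠ z0) (hd6 : y0 ≠ z0)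
    (ha : a0 ∈ S) (hb : b0 ∈ S) (hc : c0 ∈ S)
    (hx : x0 ∉ S) (hy : y0 ∉ S) (hz : z0 ∉ S)
    (hS : ∀ v ∈ S, v = a0 ∨ v = b0 ∨ v = c0)
    (hSc : ∀ v, v ∉ S → v = x0 ∨ v = y0 ∨ v = z0)
    (hSadj : ∀ u v, u ∈ S → v ∈ S → u ≠ v → C.G.Adj u v)
    (hScadj : ∀ u v, u ∉ S → v ∉ S → u ≠ v → C.G.Adj u v)
    (hX : ∀ e, e ∈ C.X ↔ ∃ u v, u ∈ S ∧ v ∉ S ∧ C.G.Adj u v ∧ e = s(u, v))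
    (hcov : ∀ u ∈ S, ∀ v, v ∉ S → ∃ p q, p ∈ S ∧ p ≠ u ∧ q ∉ S ∧ q ≠ v ∧ C.G.Adj p q)
    (p q r : C.V) (hqr : q ≠ r) (hpS : p ∈ S) (hqS : q ∉ S) (hrS : r ∉ S)
    (hpq : C.G.Adj p q) (hpr : C.G.Adj p r) :
    ∃ C', IsProperSCMinor C C' ∧ CGIso C' specialK4 := by
  obtain ⟨s1, s2, hs1, hs2, hps1, hps2, hs12, hSexh⟩ := other2 hd1 hd2 hd3 (hS p hpS)
  have hs1S : s1 ∈ S := by rcases hs1 with rfl | rfl | rfl <;> assumption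
  have hs2S : s2 ∈ S := by rcases hs2 with rfl | rfl | rfl <;> assumption
  obtain ⟨t, ht, htq, htr, hexh'⟩ := third3 hd4 hd5 hd6 (hSc q hqS) (hSc r hrS) hqr
  have htS : t ∉ S := by rcases ht with rfl | rfl | rfl <;> assumption
  have hS' : ∀ v ∈ S, v = p ∨ v = s1 ∨ v = s2 := fun v hv => hSexh v (hS v hv)
  have hSc' : ∀ v, v ∉ S → v = q ∨ v = r ∨ v = t := fun v hv => hexh' v (hSc v hv)
  obtain ⟨p1, q1, hp1S, hp1p, hq1S, hq1t, hadj1⟩ := hcov p hpS t htS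
  have hq1qr : q1 = q ∨ q1 = r := by
    rcases hSc' q1 hq1S with h | h | h
    · exact Or.inl h
    · exact Or.inr h
    · exact absurd h hq1t
  have hp1s : p1 = s1 ∨ p1 = s2 := by
    rcases hS' p1 hp1S with h | h | h
    · exact absurd h hp1p
    · exact Or.inl h
    · exact Or.inr h
  rcases hq1qr with rfl | rfl
  · -- q1 = q : use labels (p, s1, s2 | q1, r, t)
    obtain ⟨p2, q2, hp2S, hp2p, hq2S, hq2x, hadj2⟩ := hcov p hpS q1 hq1S
    have hp2s : p2 = s1 ∨ p2 = s2 := by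
      rcases hS' p2 hp2S with h | h | h
      · exact absurd h hp2p
      · exact Or.inl h
      · exact Or.inr h
    have hq2' : q2 = r ∨ q2 = t := by
      rcases hSc' q2 hq2S with h | h | h
      · exact absurd h hq2x
      · exact Or.inl h
      · exact Or.inr h
    refine core_k4 C S p s1 s2 q1 r t hps1 hps2 hs12 hqr
      (fun h => htq h.symm) (fun h => htr h.symm)
      hpS hs1S hs2S hq1S hrS htS hS' hSc'
      (hSadj p s1 hpS hs1S hps1) (hSadj s1 s2 hs1S hs2S hs12)
      (hScadj q1 r hq1S hrS hqr) (hScadj r t hrS htS (fun h => htr h.symm))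
      hX hpq (Or.inl hpr) ?_ ?_
    · rcases hp1s with rfl | rfl
      · exact Or.inl hadj1
      · exact Or.inr hadj1
    · rcases hp2s with rfl | rfl <;> rcases hq2' with rfl | rfl
      · exact Or.inl hadj2
      · exact Or.inr (Or.inl hadj2)
      · exact Or.inr (Or.inr (Or.inl hadj2))
      · exact Or.inr (Or.inr (Or.inr hadj2))
  · -- q1 = r : use labels (p, s1, s2 | q1, q, t)
    obtain ⟨p2, q2, hp2S, hp2p, hq2S, hq2x, hadj2⟩ := hcov p hpS q1 hq1S
    have hp2s : p2 = s1 ∨ p2 = s2 := by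
      rcases hS' p2 hp2S with h | h | h
      · exact absurd h hp2p
      · exact Or.inl h
      · exact Or.inr h
    have hq2' : q2 = q ∨ q2 = t := by
      rcases hSc' q2 hq2S with h | h | h
      · exact Or.inl h
      · exact absurd h hq2x
      · exact Or.inr h
    refine core_k4 C S p s1 s2 q1 q t hps1 hps2 hs12 hqr.symm
      (fun h => htr h.symm) (fun h => htq h.symm)
      hpS hs1S hs2S hq1S hqS htS hS' ?_
      (hSadj p s1 hpS hs1S hps1) (hSadj s1 s2 hs1S hs2S hs12)
      (hScadj q1 q hq1S hqS hqr.symm) (hScadj q t hqS htS (fun h => htq h.symm))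
      hX hpr (Or.inl hpq) ?_ ?_
    · intro v hv
      rcases hSc' v hv with h | h | h
      · exact Or.inr (Or.inl h)
      · exact Or.inl h
      · exact Or.inr (Or.inr h)
    · rcases hp1s with rfl | rfl
      · exact Or.inl hadj1
      · exact Or.inr hadj1
    · rcases hp2s with rfl | rfl <;> rcases hq2' with rfl | rfl
      · exact Or.inl hadj2
      · exact Or.inr (Or.inl hadj2)
      · exact Or.inr (Or.inr (Or.inl hadj2))
      · exact Or.inr (Or.inr (Or.inr hadj2))

/-- **Lemma (triangle_case).** If both sides of the bond are triangles, then `(Q, d)` is the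
special prism or has a proper special contraction minor that is the special `K₄`. -/
theorem both_sides_triangles (C : CGraph) (S : Set C.V) (h : ThreeConnAlong C.G C.X S)
    (hL : IsTriangle (sideEdges C.G S)) (hR : IsTriangle (sideEdges C.G Sᶜ)) :
    CGIso C specialPrism ∨ ∃ C', IsProperSCMinor C C' ∧ CGIso C' specialK4 := by
  classical
  obtain ⟨⟨hSne, hScne, hconnS, hconnSc, hXeq⟩, hk2, hsep⟩ := h
  obtain ⟨a, b, c, hab, hac, hbc, htriL⟩ := hL
  obtain ⟨x0, y0, z0, hxy, hxz, hyz, htriR⟩ := hR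
  obtain ⟨haS, hbS, hcS, hAB, hBC, hAC, hSexh⟩ := side_structure hconnS htriL
  obtain ⟨hxS, hyS, hzS, hXY, hYZ, hXZ, hScexh⟩ := side_structure hconnSc htriR
  have hxN : x0 ∉ S := hxS
  have hyN : y0 ∉ S := hyS
  have hzN : z0 ∉ S := hzS
  have hSc' : ∀ v, v ∉ S → v = x0 ∨ v = y0 ∨ v = z0 := fun v hv => hScexh v hv
  have hX' : ∀ e, e ∈ C.X ↔ ∃ u v, u ∈ S ∧ v ∉ S ∧ C.G.Adj u v ∧ e = s(u, v) := by
    intro e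
    rw [hXeq]
    constructor
    · rintro ⟨hedge, ⟨w1, hw1e, hw1S⟩, ⟨w2, hw2e, hw2S⟩⟩
      have hne : w1 ≠ w2 := fun h => hw2S (h ▸ hw1S)
      have heq : e = s(w1, w2) := (Sym2.mem_and_mem_iff hne).mp ⟨hw1e, hw2e⟩
      subst heq
      exact ⟨w1, w2, hw1S, hw2S, C.G.mem_edgeSet.mp hedge, rfl⟩
    · rintro ⟨u, v, huS, hvS, hadj, rfl⟩
      exact ⟨C.G.mem_edgeSet.mpr hadj, ⟨u, Sym2.mem_mk_left u v, huS⟩,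
        ⟨v, Sym2.mem_mk_right u v, hvS⟩⟩
  have hcov : ∀ u ∈ S, ∀ v, v ∉ S → ∃ p q, p ∈ S ∧ p ≠ u ∧ q ∉ S ∧ q ≠ v ∧ C.G.Adj p q := by
    intro u hu v hv
    obtain ⟨s1, s2, hs1, hs2, hus1, hus2, -, -⟩ := other2 hab hac hbc (hSexh u hu)
    have hs1S : s1 ∈ S := by rcases hs1 with rfl | rfl | rfl <;> assumption
    obtain ⟨t1, t2, ht1, ht2, hvt1, hvt2, -, -⟩ := other2 hxy hxz hyz (hSc' v hv)
    have ht1S : t1 ∉ S := by rcases ht1 with rfl | rfl | rfl <;> assumption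
    exact cover_lemma hsep hu hv hs1S ht1S hus1.symm hvt1.symm
  have hSadj : ∀ u v, u ∈ S → v ∈ S → u ≠ v → C.G.Adj u v := by
    intro u v hu hv huv
    rcases hSexh u hu with rfl | rfl | rfl <;> rcases hSexh v hv with rfl | rfl | rfl <;>
      first
        | exact absurd rfl huv
        | exact hAB | exact hAB.symm | exact hAC | exact hAC.symm
        | exact hBC | exact hBC.symm
  have hScadj : ∀ u v, u ∉ S → v ∉ S → u ≠ v → C.G.Adj u v := by
    intro u v hu hv huv
    rcases hSc' u hu with rfl | rfl | rfl <;> rcases hSc' v hv with rfl | rfl | rfl <;>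
      first
        | exact absurd rfl huv
        | exact hXY | exact hXY.symm | exact hXZ | exact hXZ.symm
        | exact hYZ | exact hYZ.symm
  by_cases hdeg : ∃ p q r : C.V, q ≠ r ∧ C.G.Adj p q ∧ C.G.Adj p r ∧
      ((p ∈ S ∧ q ∉ S ∧ r ∉ S) ∨ (p ∉ S ∧ q ∈ S ∧ r ∈ S))
  · right
    obtain ⟨p, q, r, hqr, hpq, hpr, hside⟩ := hdeg
    rcases hside with ⟨hpS, hqS, hrS⟩ | ⟨hpS, hqS, hrS⟩
    · exact k4_case C S a b c x0 y0 z0 hab hac hbc hxy hxz hyz haS hbS hcS hxN hyN hzN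
        hSexh hSc' hSadj hScadj hX' hcov p q r hqr hpS hqS hrS hpq hpr
    · have hX'' : ∀ e, e ∈ C.X ↔ ∃ u v, u ∈ Sᶜ ∧ v ∉ Sᶜ ∧ C.G.Adj u v ∧ e = s(u, v) := by
        intro e
        rw [hX' e]
        constructor
        · rintro ⟨u, v, huS, hvS, hadj, rfl⟩
          exact ⟨v, u, hvS, fun h' => h' huS, hadj.symm, Sym2.eq_swap⟩
        · rintro ⟨u, v, huS, hvS, hadj, rfl⟩
          exact ⟨v, u, not_not.mp hvS, huS, hadj.symm, Sym2.eq_swap⟩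
      have hcov' : ∀ u ∈ Sᶜ, ∀ v, v ∉ Sᶜ →
          ∃ p' q', p' ∈ Sᶜ ∧ p' ≠ u ∧ q' ∉ Sᶜ ∧ q' ≠ v ∧ C.G.Adj p' q' := by
        intro u hu v hv
        obtain ⟨p', q', hp'S, hp'v, hq'S, hq'u, hadj⟩ := hcov v (not_not.mp hv) u hu
        exact ⟨q', p', hq'S, hq'u, fun h' => h' hp'S, hp'v, hadj.symm⟩
      exact k4_case C Sᶜ x0 y0 z0 a b c hxy hxz hyz hab hac hbc hxN hyN hzN
        (fun h' => h' haS) (fun h' => h' hbS) (fun h' => h' hcS)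
        (fun v hv => hSc' v hv) (fun v hv => hSexh v (not_not.mp hv))
        (fun u v hu hv => hScadj u v hu hv)
        (fun u v hu hv => hSadj u v (not_not.mp hu) (not_not.mp hv))
        hX'' hcov' p q r hqr hpS (fun h' => h' hqS) (fun h' => h' hrS) hpq hpr
  · left
    have huniq : ∀ p q q', p ∈ S → q ∉ S → q' ∉ S → C.G.Adj p q → C.G.Adj p q' → q = q' := by
      intro p q q' hp hq hq' h1' h2'
      by_contra hne
      exact hdeg ⟨p, q, q', hne, h1', h2', Or.inl ⟨hp, hq, hq'⟩⟩
    have huniq' : ∀ p q q', p ∉ S → q ∈ S → q' ∈ S → C.G.Adj p q → C.G.Adj p q' → q = q' := by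
      intro p q q' hp hq hq' h1' h2'
      by_contra hne
      exact hdeg ⟨p, q, q', hne, h1', h2', Or.inr ⟨hp, hq, hq'⟩⟩
    have hnbr : ∀ p, p ∈ S → ∃ q, q ∉ S ∧ C.G.Adj p q := by
      intro p hp
      by_contra hno
      push_neg at hno
      obtain ⟨s1, s2, hs1, hs2, hps1, hps2, hs12, hex⟩ := other2 hab hac hbc (hSexh p hp)
      have hs1S : s1 ∈ S := by rcases hs1 with rfl | rfl | rfl <;> assumption
      have hs2S : s2 ∈ S := by rcases hs2 with rfl | rfl | rfl <;> assumption
      obtain ⟨p1, q1, hp1S, hp1p, hq1S, -, hadj1⟩ := hcov p hp x0 hxN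
      have hp1 : p1 = s1 ∨ p1 = s2 := by
        rcases hex p1 (hSexh p1 hp1S) with h' | h' | h'
        · exact absurd h' hp1p
        · exact Or.inl h'
        · exact Or.inr h'
      rcases hp1 with rfl | rfl
      · obtain ⟨p4, q4, hp4S, hp4p2, hq4S, hq4q1, hadj4⟩ := hcov s2 hs2S q1 hq1S
        have hp4p : p4 ≠ p := fun h' => hno q4 hq4S (h' ▸ hadj4)
        have hp4 : p4 = p1 := by
          rcases hex p4 (hSexh p4 hp4S) with h' | h' | h'
          · exact absurd h' hp4p
          · exact h'
          · exact absurd h' hp4p2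
        subst hp4
        exact hdeg ⟨p4, q1, q4, fun h' => hq4q1 h'.symm, hadj1, hadj4,
          Or.inl ⟨hp1S, hq1S, hq4S⟩⟩
      · obtain ⟨p4, q4, hp4S, hp4p2, hq4S, hq4q1, hadj4⟩ := hcov s1 hs1S q1 hq1S
        have hp4p : p4 ≠ p := fun h' => hno q4 hq4S (h' ▸ hadj4)
        have hp4 : p4 = p1 := by
          rcases hex p4 (hSexh p4 hp4S) with h' | h' | h'
          · exact absurd h' hp4p
          · exact absurd h' hp4p2
          · exact h'
        subst hp4
        exact hdeg ⟨p4, q1, q4, fun h' => hq4q1 h'.symm, hadj1, hadj4,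
          Or.inl ⟨hp1S, hq1S, hq4S⟩⟩
    obtain ⟨qa, hqaS, hqa⟩ := hnbr a haS
    obtain ⟨qb, hqbS, hqb⟩ := hnbr b hbS
    obtain ⟨qc, hqcS, hqc⟩ := hnbr c hcS
    have hqab : qa ≠ qb := by
      intro h'
      exact hab (huniq' qa a b hqaS haS hbS hqa.symm (by rw [h']; exact hqb.symm))
    have hqac : qa ≠ qc := by
      intro h'
      exact hac (huniq' qa a c hqaS haS hcS hqa.symm (by rw [h']; exact hqc.symm))
    have hqbc : qb ≠ qc := by
      intro h'
      exact hbc (huniq' qb b c hqbS hbS hcS hqb.symm (by rw [h']; exact hqc.symm))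
    have nay : ¬ C.G.Adj a qb := fun h' => hqab (huniq a qa qb haS hqaS hqbS hqa h')
    have naz : ¬ C.G.Adj a qc := fun h' => hqac (huniq a qa qc haS hqaS hqcS hqa h')
    have nbx : ¬ C.G.Adj b qa := fun h' => hqab ((huniq b qb qa hbS hqbS hqaS hqb h').symm)
    have nbz : ¬ C.G.Adj b qc := fun h' => hqbc (huniq b qb qc hbS hqbS hqcS hqb h')
    have ncx : ¬ C.G.Adj c qa := fun h' => hqac ((huniq c qc qa hcS hqcS hqaS hqc h').symm)
    have ncy : ¬ C.G.Adj c qb := fun h' => hqbc ((huniq c qc qb hcS hqcS hqbS hqc h').symm)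
    have hexh6 : ∀ v, v = a ∨ v = b ∨ v = c ∨ v = qa ∨ v = qb ∨ v = qc := by
      intro v
      by_cases hv : v ∈ S
      · rcases hSexh v hv with h' | h' | h' <;> tauto
      · have := exhaust3 (hSc' qa hqaS) (hSc' qb hqbS) (hSc' qc hqcS) hqab hqac hqbc
          v (hSc' v hv)
        tauto
    have hCX : C.X = {s(a, qa), s(b, qb), s(c, qc)} := by
      apply Set.ext
      intro e
      constructor
      · intro he
        obtain ⟨u, v, huS, hvS, hadj, rfl⟩ := (hX' _).mp he
        rcases hSexh u huS with rfl | rfl | rfl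
        · have hv' : v = qa := huniq u v qa huS hvS hqaS hadj hqa
          subst hv'
          exact Set.mem_insert _ _
        · have hv' : v = qb := huniq u v qb huS hvS hqbS hadj hqb
          subst hv'
          exact Set.mem_insert_of_mem _ (Set.mem_insert _ _)
        · have hv' : v = qc := huniq u v qc huS hvS hqcS hadj hqc
          subst hv'
          exact Set.mem_insert_of_mem _ (Set.mem_insert_of_mem _ rfl)
      · intro he
        simp only [Set.mem_insert_iff, Set.mem_singleton_iff] at he
        rcases he with rfl | rfl | rfl
        · exact (hX' _).mpr ⟨a, qa, haS, hqaS, hqa, rfl⟩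
        · exact (hX' _).mpr ⟨b, qb, hbS, hqbS, hqb, rfl⟩
        · exact (hX' _).mpr ⟨c, qc, hcS, hqcS, hqc, rfl⟩
    have nst : ∀ u ∈ S, ∀ v, v ∉ S → u ≠ v := fun u hu v hv h' => hv (h' ▸ hu)
    exact cgiso_prism C a b c qa qb qc hab hac hbc hqab hqac hqbc
      (nst a haS qa hqaS) (nst a haS qb hqbS) (nst a haS qc hqcS)
      (nst b hbS qa hqaS) (nst b hbS qb hqbS) (nst b hbS qc hqcS)
      (nst c hcS qa hqaS) (nst c hcS qb hqbS) (nst c hcS qc hqcS)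
      hexh6 hAB hAC hBC
      (hScadj qa qb hqaS hqbS hqab) (hScadj qa qc hqaS hqcS hqac)
      (hScadj qb qc hqbS hqcS hqbc)
      hqa hqb hqc nay naz nbx nbz ncx ncy hCX
end

section
/- Let Q be a graph 3-connected along a bond d, with left edge set L and right edge set R. If Q[L] is a single edge and Q[R] is a triangle, then (Q,d) has a proper special contraction minor that is the special K4. -/
open SimpleGraph

section EdgeTriangleAux

private lemma reach_first {V : Type*} {H : SimpleGraph V} {u v : V} (h : H.Reachable u v)
    (hne : u ≠ v) : ∃ w, H.Adj u w := by
  obtain ⟨p⟩ := h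
  cases p with
  | nil => exact absurd rfl hne
  | cons h _ => exact ⟨_, h⟩

private noncomputable def quadFun {V : Type*} (a' b' p' : V) (w : V) : Fin 4 :=
  letI := Classical.decEq V
  if w = a' then 0 else if w = b' then 1 else if w = p' then 2 else 3

private lemma quadFun_a {V : Type*} (a' b' p' : V) : quadFun a' b' p' a' = 0 := by
  simp [quadFun]

private lemma quadFun_b {V : Type*} {a' b' : V} (p' : V) (h : b' ≠ a') :
    quadFun a' b' p' b' = 1 := by
  simp [quadFun, h]

private lemma quadFun_p {V : Type*} {a' b' p' : V} (h1 : p' ≠ a') (h2 : p' ≠ b') :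
    quadFun a' b' p' p' = 2 := by
  simp [quadFun, h1, h2]

private lemma quadFun_other {V : Type*} {a' b' p' w : V} (h1 : w ≠ a') (h2 : w ≠ b')
    (h3 : w ≠ p') : quadFun a' b' p' w = 3 := by
  simp [quadFun, h1, h2, h3]

private noncomputable def quadInv {V : Type*} (a' b' p' q' : V) (i : Fin 4) : V :=
  if i = 0 then a' else if i = 1 then b' else if i = 2 then p' else q'

private lemma quadInv_0 {V : Type*} (a' b' p' q' : V) : quadInv a' b' p' q' 0 = a' := by
  simp [quadInv]

private lemma quadInv_1 {V : Type*} (a' b' p' q' : V) : quadInv a' b' p' q' 1 = b' := by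
  simp [quadInv]

private lemma quadInv_2 {V : Type*} (a' b' p' q' : V) : quadInv a' b' p' q' 2 = p' := by
  simp [quadInv]

private lemma quadInv_3 {V : Type*} (a' b' p' q' : V) : quadInv a' b' p' q' 3 = q' := by
  simp [quadInv]

private noncomputable def quadEquiv {V : Type*} (a' b' p' q' : V)
    (hba : b' ≠ a') (hpa : p' ≠ a') (hpb : p' ≠ b')
    (hqa : q' ≠ a') (hqb : q' ≠ b') (hqp : q' ≠ p')
    (hcov : ∀ w : V, w = a' ∨ w = b' ∨ w = p' ∨ w = q') : V ≃ Fin 4 where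
  toFun := quadFun a' b' p'
  invFun := quadInv a' b' p' q'
  left_inv := by
    intro w
    rcases hcov w with rfl | rfl | rfl | rfl
    · rw [quadFun_a, quadInv_0]
    · rw [quadFun_b _ hba, quadInv_1]
    · rw [quadFun_p hpa hpb, quadInv_2]
    · rw [quadFun_other hqa hqb hqp, quadInv_3]
  right_inv := by
    intro i
    fin_cases i
    · show quadFun a' b' p' (quadInv a' b' p' q' 0) = 0
      rw [quadInv_0, quadFun_a]
    · show quadFun a' b' p' (quadInv a' b' p' q' 1) = 1
      rw [quadInv_1, quadFun_b _ hba]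
    · show quadFun a' b' p' (quadInv a' b' p' q' 2) = 2
      rw [quadInv_2, quadFun_p hpa hpb]
    · show quadFun a' b' p' (quadInv a' b' p' q' 3) = 3
      rw [quadInv_3, quadFun_other hqa hqb hqp]

private lemma key_lemma (C : CGraph) (S : Set C.V) (a b p q r : C.V)
    (hSab : S = {a, b}) (hSc : Sᶜ = {p, q, r})
    (hab : C.G.Adj a b) (hpq : C.G.Adj p q) (hqr : C.G.Adj q r) (hpr : p ≠ r)
    (hap : C.G.Adj a p) (hbp : C.G.Adj b p)
    (haq : C.G.Adj a q ∨ C.G.Adj a r) (hbq : C.G.Adj b q ∨ C.G.Adj b r)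
    (hX : C.X = crossEdges C.G S) :
    ∃ C', IsProperSCMinor C C' ∧ CGIso C' specialK4 := by
  classical
  have haS : a ∈ S := by rw [hSab]; simp
  have hbS : b ∈ S := by rw [hSab]; simp
  have hpS : p ∈ Sᶜ := by rw [hSc]; simp
  have hqS : q ∈ Sᶜ := by rw [hSc]; simp
  have hrS : r ∈ Sᶜ := by rw [hSc]; simp
  have hSSc : ∀ u, u ∈ S → ∀ v, v ∈ Sᶜ → u ≠ v := fun u hu v hv h => hv (h ▸ hu)
  have har : a ≠ r := hSSc a haS r hrS
  have hbr : b ≠ r := hSSc b hbS r hrS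
  have hpa : a ≠ p := hSSc a haS p hpS
  have hqa : a ≠ q := hSSc a haS q hqS
  have hpb : b ≠ p := hSSc b hbS p hpS
  have hqb : b ≠ q := hSSc b hbS q hqS
  have hne_ab : a ≠ b := hab.ne
  have hne_pq : p ≠ q := hpq.ne
  have hqr' : q ≠ r := hqr.ne
  have fne : ∀ (x : C.V) (hx : x ≠ r), contractFun hqr' x = ⟨x, hx⟩ := by
    intro x hx
    simp only [contractFun]
    rw [dif_neg hx]
  have fr : contractFun hqr' r = ⟨q, hqr'⟩ := by
    simp [contractFun]
  have hdX : s(q, r) ∉ C.X := by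
    rw [hX]
    rintro ⟨-, ⟨w, hw, hwS⟩, -⟩
    rcases Sym2.mem_iff.mp hw with rfl | rfl
    · exact hqS hwS
    · exact hrS hwS
  have cover : ∀ w : C.V, w = a ∨ w = b ∨ w = p ∨ w = q ∨ w = r := by
    intro w
    by_cases hw : w ∈ S
    · rw [hSab] at hw
      simp only [Set.mem_insert_iff, Set.mem_singleton_iff] at hw
      tauto
    · have hw' : w ∈ Sᶜ := hw
      rw [hSc] at hw'
      simp only [Set.mem_insert_iff, Set.mem_singleton_iff] at hw'
      tauto
  have cover' : ∀ w : {w : C.V // w ≠ r},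
      w = ⟨a, har⟩ ∨ w = ⟨b, hbr⟩ ∨ w = ⟨p, hpr⟩ ∨ w = ⟨q, hqr'⟩ := by
    rintro ⟨w, hw⟩
    rcases cover w with rfl | rfl | rfl | rfl | rfl
    · exact Or.inl rfl
    · exact Or.inr (Or.inl rfl)
    · exact Or.inr (Or.inr (Or.inl rfl))
    · exact Or.inr (Or.inr (Or.inr rfl))
    · exact absurd rfl hw
  have adjW : ∀ (s t : C.V), C.G.Adj s t → ∀ (u v : {w : C.V // w ≠ r}),
      contractFun hqr' s = u → contractFun hqr' t = v → u ≠ v →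
      (C.contract q r hqr').G.Adj u v := by
    intro s t hst u v hs ht hne
    refine (fromEdgeSet_adj _).mpr ⟨⟨s(s, t), hst, ?_⟩, hne⟩
    subst hs
    subst ht
    rw [Sym2.map_pair_eq]
    rfl
  have nab : (⟨a, har⟩ : {w : C.V // w ≠ r}) ≠ ⟨b, hbr⟩ :=
    fun h => hne_ab (congrArg Subtype.val h)
  have nap : (⟨a, har⟩ : {w : C.V // w ≠ r}) ≠ ⟨p, hpr⟩ :=
    fun h => hpa (congrArg Subtype.val h)
  have naq : (⟨a, har⟩ : {w : C.V // w ≠ r}) ≠ ⟨q, hqr'⟩ :=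
    fun h => hqa (congrArg Subtype.val h)
  have nbp : (⟨b, hbr⟩ : {w : C.V // w ≠ r}) ≠ ⟨p, hpr⟩ :=
    fun h => hpb (congrArg Subtype.val h)
  have nbq : (⟨b, hbr⟩ : {w : C.V // w ≠ r}) ≠ ⟨q, hqr'⟩ :=
    fun h => hqb (congrArg Subtype.val h)
  have npq : (⟨p, hpr⟩ : {w : C.V // w ≠ r}) ≠ ⟨q, hqr'⟩ :=
    fun h => hne_pq (congrArg Subtype.val h)
  have A1 : (C.contract q r hqr').G.Adj ⟨a, har⟩ ⟨b, hbr⟩ :=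
    adjW a b hab _ _ (fne a har) (fne b hbr) nab
  have A2 : (C.contract q r hqr').G.Adj ⟨a, har⟩ ⟨p, hpr⟩ :=
    adjW a p hap _ _ (fne a har) (fne p hpr) nap
  have A3 : (C.contract q r hqr').G.Adj ⟨b, hbr⟩ ⟨p, hpr⟩ :=
    adjW b p hbp _ _ (fne b hbr) (fne p hpr) nbp
  have A4 : (C.contract q r hqr').G.Adj ⟨p, hpr⟩ ⟨q, hqr'⟩ :=
    adjW p q hpq _ _ (fne p hpr) (fne q hqr') npq
  have A5 : (C.contract q r hqr').G.Adj ⟨a, har⟩ ⟨q, hqr'⟩ := by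
    rcases haq with h | h
    · exact adjW a q h _ _ (fne a har) (fne q hqr') naq
    · exact adjW a r h _ _ (fne a har) fr naq
  have A6 : (C.contract q r hqr').G.Adj ⟨b, hbr⟩ ⟨q, hqr'⟩ := by
    rcases hbq with h | h
    · exact adjW b q h _ _ (fne b hbr) (fne q hqr') nbq
    · exact adjW b r h _ _ (fne b hbr) fr nbq
  have hadj : ∀ u v : {w : C.V // w ≠ r},
      (C.contract q r hqr').G.Adj u v ↔ u ≠ v := by
    intro u v
    refine ⟨fun h => ((fromEdgeSet_adj _).mp h).2, fun hne => ?_⟩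
    rcases cover' u with rfl | rfl | rfl | rfl <;>
      rcases cover' v with rfl | rfl | rfl | rfl <;>
      first
        | exact absurd rfl hne
        | exact A1 | exact A1.symm | exact A2 | exact A2.symm
        | exact A3 | exact A3.symm | exact A4 | exact A4.symm
        | exact A5 | exact A5.symm | exact A6 | exact A6.symm
  -- the equiv onto Fin 4
  let eqv : {w : C.V // w ≠ r} ≃ Fin 4 :=
    quadEquiv ⟨a, har⟩ ⟨b, hbr⟩ ⟨p, hpr⟩ ⟨q, hqr'⟩ nab.symm nap.symm nbp.symm
      naq.symm nbq.symm npq.symm cover'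
  have ev_a : eqv ⟨a, har⟩ = 0 := quadFun_a _ _ _
  have ev_b : eqv ⟨b, hbr⟩ = 1 := quadFun_b _ nab.symm
  have ev_p : eqv ⟨p, hpr⟩ = 2 := quadFun_p nap.symm nbp.symm
  have ev_q : eqv ⟨q, hqr'⟩ = 3 := quadFun_other naq.symm nbq.symm npq.symm
  have hrel : ∀ u v : {w : C.V // w ≠ r},
      specialK4.G.Adj (eqv u) (eqv v) ↔ (C.contract q r hqr').G.Adj u v := by
    intro u v
    rw [hadj u v]
    exact eqv.injective.ne_iff
  refine ⟨C.contract q r hqr', Relation.TransGen.single (SCMStep.contr C q r hqr hdX),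
    ⟨eqv, @fun u v => hrel u v⟩, ?_⟩
  have hcoe : (⇑(⟨eqv, @fun u v => hrel u v⟩ : (C.contract q r hqr').G ≃g specialK4.G) :
      {w : C.V // w ≠ r} → Fin 4) = ⇑eqv := rfl
  rw [hcoe]
  apply Set.Subset.antisymm
  · rintro E ⟨E1, hE1, rfl⟩
    obtain ⟨⟨E0, hE0, rfl⟩, hdiag⟩ := hE1
    rw [hX] at hE0
    obtain ⟨hedge, ⟨w1, hw1, hw1S⟩, ⟨w2, hw2, hw2S⟩⟩ := hE0
    have hww : w1 ≠ w2 := fun h => hw2S (h ▸ hw1S)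
    have hE : E0 = s(w1, w2) := (Sym2.mem_and_mem_iff hww).mp ⟨hw1, hw2⟩
    subst hE
    have hu' : w1 = a ∨ w1 = b := by
      rw [hSab] at hw1S
      simpa using hw1S
    have hv' : w2 = p ∨ w2 = q ∨ w2 = r := by
      have h2 : w2 ∈ Sᶜ := hw2S
      rw [hSc] at h2
      simpa using h2
    rcases hu' with h1 | h1 <;> rcases hv' with h2 | h2 | h2 <;> rw [h1, h2]
    · rw [Sym2.map_pair_eq, fne a har, fne p hpr]
      show s(eqv _, eqv _) ∈ specialK4.X
      rw [ev_a, ev_p]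
      simp [specialK4]
      exact Or.inl rfl
    · rw [Sym2.map_pair_eq, fne a har, fne q hqr']
      show s(eqv _, eqv _) ∈ specialK4.X
      rw [ev_a, ev_q]
      simp [specialK4]
      exact Or.inr (Or.inl rfl)
    · rw [Sym2.map_pair_eq, fne a har, fr]
      show s(eqv _, eqv _) ∈ specialK4.X
      rw [ev_a, ev_q]
      simp [specialK4]
      exact Or.inr (Or.inl rfl)
    · rw [Sym2.map_pair_eq, fne b hbr, fne p hpr]
      show s(eqv _, eqv _) ∈ specialK4.X
      rw [ev_b, ev_p]
      simp [specialK4]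
      exact Or.inr (Or.inr (Or.inl rfl))
    · rw [Sym2.map_pair_eq, fne b hbr, fne q hqr']
      show s(eqv _, eqv _) ∈ specialK4.X
      rw [ev_b, ev_q]
      simp [specialK4]
      exact Or.inr (Or.inr (Or.inr rfl))
    · rw [Sym2.map_pair_eq, fne b hbr, fr]
      show s(eqv _, eqv _) ∈ specialK4.X
      rw [ev_b, ev_q]
      simp [specialK4]
      exact Or.inr (Or.inr (Or.inr rfl))
  · intro E hE
    have mkmem : ∀ (s t : C.V) (hs : s ≠ r) (ht : t ≠ r), C.G.Adj s t → s ∈ S → t ∈ Sᶜ →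
        s(⟨s, hs⟩, ⟨t, ht⟩) ∈ (C.contract q r hqr').X := by
      intro s t hs ht hst hsS htS
      refine ⟨⟨s(s, t), ?_, by rw [Sym2.map_pair_eq, fne s hs, fne t ht]; rfl⟩, ?_⟩
      · rw [hX]
        exact ⟨hst, ⟨s, Sym2.mem_iff.mpr (Or.inl rfl), hsS⟩,
          ⟨t, Sym2.mem_iff.mpr (Or.inr rfl), htS⟩⟩
      · erw [Sym2.mk_isDiag_iff]
        intro hh
        have hst' : s = t := congrArg Subtype.val hh
        exact htS (hst' ▸ hsS)
    have mkmemr : ∀ (s : C.V) (hs : s ≠ r), C.G.Adj s r → s ∈ S →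
        s(⟨s, hs⟩, ⟨q, hqr'⟩) ∈ (C.contract q r hqr').X := by
      intro s hs hst hsS
      refine ⟨⟨s(s, r), ?_, by rw [Sym2.map_pair_eq, fne s hs, fr]; rfl⟩, ?_⟩
      · rw [hX]
        exact ⟨hst, ⟨s, Sym2.mem_iff.mpr (Or.inl rfl), hsS⟩,
          ⟨r, Sym2.mem_iff.mpr (Or.inr rfl), hrS⟩⟩
      · erw [Sym2.mk_isDiag_iff]
        intro hh
        have hsq : s = q := congrArg Subtype.val hh
        exact hqS (hsq ▸ hsS)
    have haqX : s(⟨a, har⟩, ⟨q, hqr'⟩) ∈ (C.contract q r hqr').X := by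
      rcases haq with h | h
      · exact mkmem a q har hqr' h haS hqS
      · exact mkmemr a har h haS
    have hbqX : s(⟨b, hbr⟩, ⟨q, hqr'⟩) ∈ (C.contract q r hqr').X := by
      rcases hbq with h | h
      · exact mkmem b q hbr hqr' h hbS hqS
      · exact mkmemr b hbr h hbS
    simp only [specialK4, Set.mem_insert_iff, Set.mem_singleton_iff] at hE
    rcases hE with rfl | rfl | rfl | rfl
    · exact ⟨s(⟨a, har⟩, ⟨p, hpr⟩), mkmem a p har hpr hap haS hpS,
        by show s(eqv _, eqv _) = _; rw [ev_a, ev_p]⟩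
    · exact ⟨s(⟨a, har⟩, ⟨q, hqr'⟩), haqX, by show s(eqv _, eqv _) = _; rw [ev_a, ev_q]⟩
    · exact ⟨s(⟨b, hbr⟩, ⟨p, hpr⟩), mkmem b p hbr hpr hbp hbS hpS,
        by show s(eqv _, eqv _) = _; rw [ev_b, ev_p]⟩
    · exact ⟨s(⟨b, hbr⟩, ⟨q, hqr'⟩), hbqX, by show s(eqv _, eqv _) = _; rw [ev_b, ev_q]⟩

end EdgeTriangleAux

set_option maxHeartbeats 1600000

/-- **Lemma (case_ana).** If one side of the bond is a single edge and the other a triangle,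
then `(Q, d)` has a proper special contraction minor that is the special `K₄`. -/
theorem edge_and_triangle (C : CGraph) (S : Set C.V) (h : ThreeConnAlong C.G C.X S)
    (hL : IsSingleEdge (sideEdges C.G S)) (hR : IsTriangle (sideEdges C.G Sᶜ)) :
    ∃ C', IsProperSCMinor C C' ∧ CGIso C' specialK4 := by
  classical
  obtain ⟨hbond, hk2, h3⟩ := h
  obtain ⟨hSne, hScne, hconnS, hconnSc, hd⟩ := hbond
  obtain ⟨a, b, hab_ne, hLe⟩ := hL
  obtain ⟨x, y, z, hxy, hxz, hyz, hRe⟩ := hR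
  -- basic memberships and adjacencies
  have hmab : s(a, b) ∈ sideEdges C.G S := by rw [hLe]; rfl
  obtain ⟨hedgeab, hallab⟩ := hmab
  have hab : C.G.Adj a b := hedgeab
  have haS : a ∈ S := hallab a (Sym2.mem_iff.mpr (Or.inl rfl))
  have hbS : b ∈ S := hallab b (Sym2.mem_iff.mpr (Or.inr rfl))
  have hmxy : s(x, y) ∈ sideEdges C.G Sᶜ := by rw [hRe]; simp
  have hmyz : s(y, z) ∈ sideEdges C.G Sᶜ := by rw [hRe]; simp
  have hmxz : s(x, z) ∈ sideEdges C.G Sᶜ := by rw [hRe]; simp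
  have hxy' : C.G.Adj x y := hmxy.1
  have hyz' : C.G.Adj y z := hmyz.1
  have hxz' : C.G.Adj x z := hmxz.1
  have hxS : x ∈ Sᶜ := hmxy.2 x (Sym2.mem_iff.mpr (Or.inl rfl))
  have hyS : y ∈ Sᶜ := hmxy.2 y (Sym2.mem_iff.mpr (Or.inr rfl))
  have hzS : z ∈ Sᶜ := hmxz.2 z (Sym2.mem_iff.mpr (Or.inr rfl))
  have hSSc : ∀ u, u ∈ S → ∀ v, v ∈ Sᶜ → u ≠ v := fun u hu v hv h => hv (h ▸ hu)
  -- S = {a, b}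
  have hSab : S = {a, b} := by
    apply Set.Subset.antisymm
    · intro c hc
      by_contra hcn
      simp only [Set.mem_insert_iff, Set.mem_singleton_iff, not_or] at hcn
      obtain ⟨hca, hcb⟩ := hcn
      have hre : (C.G.induce S).Reachable ⟨c, hc⟩ ⟨a, haS⟩ := hconnS.preconnected _ _
      obtain ⟨w, hw⟩ := reach_first hre (fun h => hca (congrArg Subtype.val h))
      have hadj : C.G.Adj c ↑w := hw
      have hside : s(c, (w : C.V)) ∈ sideEdges C.G S := by
        refine ⟨hadj, ?_⟩
        intro v hv
        rcases Sym2.mem_iff.mp hv with rfl | rfl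
        · exact hc
        · exact w.2
      rw [hLe, Set.mem_singleton_iff, Sym2.eq_iff] at hside
      rcases hside with ⟨h1, -⟩ | ⟨h1, -⟩
      · exact hca h1
      · exact hcb h1
    · intro c hc
      rcases hc with rfl | hc
      · exact haS
      · rw [Set.mem_singleton_iff] at hc; exact hc ▸ hbS
  -- Sᶜ = {x, y, z}
  have hSc : Sᶜ = {x, y, z} := by
    apply Set.Subset.antisymm
    · intro c hc
      by_contra hcn
      simp only [Set.mem_insert_iff, Set.mem_singleton_iff, not_or] at hcn
      obtain ⟨hcx, hcy, hcz⟩ := hcn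
      have hre : (C.G.induce Sᶜ).Reachable ⟨c, hc⟩ ⟨x, hxS⟩ := hconnSc.preconnected _ _
      obtain ⟨w, hw⟩ := reach_first hre (fun h => hcx (congrArg Subtype.val h))
      have hadj : C.G.Adj c ↑w := hw
      have hside : s(c, (w : C.V)) ∈ sideEdges C.G Sᶜ := by
        refine ⟨hadj, ?_⟩
        intro v hv
        rcases Sym2.mem_iff.mp hv with rfl | rfl
        · exact hc
        · exact w.2
      rw [hRe] at hside
      simp only [Set.mem_insert_iff, Set.mem_singleton_iff, Sym2.eq_iff] at hside
      rcases hside with (⟨h1, -⟩ | ⟨h1, -⟩) | (⟨h1, -⟩ | ⟨h1, -⟩) | (⟨h1, -⟩ | ⟨h1, -⟩)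
      · exact hcx h1
      · exact hcy h1
      · exact hcy h1
      · exact hcz h1
      · exact hcx h1
      · exact hcz h1
    · intro c hc
      rcases hc with rfl | hc
      · exact hxS
      · rcases hc with rfl | hc
        · exact hyS
        · rw [Set.mem_singleton_iff] at hc; exact hc ▸ hzS
  have cover : ∀ w : C.V, w = a ∨ w = b ∨ w = x ∨ w = y ∨ w = z := by
    intro w
    by_cases hw : w ∈ S
    · rw [hSab] at hw
      simp only [Set.mem_insert_iff, Set.mem_singleton_iff] at hw
      rcases hw with h | h
      exacts [Or.inl h, Or.inr (Or.inl h)]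
    · have hw' : w ∈ Sᶜ := hw
      rw [hSc] at hw'
      simp only [Set.mem_insert_iff, Set.mem_singleton_iff] at hw'
      rcases hw' with h | h | h
      exacts [Or.inr (Or.inr (Or.inl h)), Or.inr (Or.inr (Or.inr (Or.inl h))),
        Or.inr (Or.inr (Or.inr (Or.inr h)))]
  have pcov : ∀ u1 u2 v1 v2 v3 : C.V,
      (∀ w : C.V, w = u1 ∨ w = u2 ∨ w = v1 ∨ w = v2 ∨ w = v3) →
      ∀ w : C.V, w = u2 ∨ w = u1 ∨ w = v1 ∨ w = v2 ∨ w = v3 := by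
    intro u1 u2 v1 v2 v3 hc w
    rcases hc w with h | h | h
    exacts [Or.inr (Or.inl h), Or.inl h, Or.inr (Or.inr h)]
  have vcov : ∀ u1 u2 v1 v2 v3 : C.V,
      (∀ w : C.V, w = u1 ∨ w = u2 ∨ w = v1 ∨ w = v2 ∨ w = v3) →
      ∀ w : C.V, w = u1 ∨ w = u2 ∨ w = v2 ∨ w = v1 ∨ w = v3 := by
    intro u1 u2 v1 v2 v3 hc w
    rcases hc w with h | h | h | h | h
    exacts [Or.inl h, Or.inr (Or.inl h), Or.inr (Or.inr (Or.inr (Or.inl h))),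
      Or.inr (Or.inr (Or.inl h)), Or.inr (Or.inr (Or.inr (Or.inr h)))]
  have wcov : ∀ u1 u2 v1 v2 v3 : C.V,
      (∀ w : C.V, w = u1 ∨ w = u2 ∨ w = v1 ∨ w = v2 ∨ w = v3) →
      ∀ w : C.V, w = u1 ∨ w = u2 ∨ w = v3 ∨ w = v1 ∨ w = v2 := by
    intro u1 u2 v1 v2 v3 hc w
    rcases hc w with h | h | h | h | h
    exacts [Or.inl h, Or.inr (Or.inl h), Or.inr (Or.inr (Or.inr (Or.inl h))),
      Or.inr (Or.inr (Or.inr (Or.inr h))), Or.inr (Or.inr (Or.inl h))]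
  -- separation consequences
  have sep : ∀ s u t v1 v2 : C.V, s ∈ S → u ∈ S → t ∈ Sᶜ → v1 ∈ Sᶜ → u ≠ s → u ≠ v1 →
      v1 ≠ t → (∀ w : C.V, w = s ∨ w = u ∨ w = t ∨ w = v1 ∨ w = v2) →
      C.G.Adj u v1 ∨ C.G.Adj u v2 := by
    intro s u t v1 v2 hsS huS htS hv1S hus huv1 hv1t hcov
    have hP := h3 s hsS t htS
    have hu' : u ∈ ({s, t}ᶜ : Set C.V) := by
      simp only [Set.mem_compl_iff, Set.mem_insert_iff, Set.mem_singleton_iff, not_or]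
      exact ⟨hus, hSSc u huS t htS⟩
    have hv1' : v1 ∈ ({s, t}ᶜ : Set C.V) := by
      simp only [Set.mem_compl_iff, Set.mem_insert_iff, Set.mem_singleton_iff, not_or]
      exact ⟨fun h => hSSc s hsS v1 hv1S h.symm, hv1t⟩
    have hre := hP ⟨u, hu'⟩ ⟨v1, hv1'⟩
    obtain ⟨w, hw⟩ := reach_first hre (fun h => huv1 (congrArg Subtype.val h))
    have hadj : C.G.Adj u ↑w := hw
    have hwmem := w.2
    simp only [Set.mem_compl_iff, Set.mem_insert_iff, Set.mem_singleton_iff, not_or] at hwmem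
    obtain ⟨hws, hwt⟩ := hwmem
    rcases hcov ↑w with h | h | h | h | h
    · exact absurd h hws
    · exact absurd h.symm hadj.ne
    · exact absurd h hwt
    · exact Or.inl (h ▸ hadj)
    · exact Or.inr (h ▸ hadj)
  have haYZ : C.G.Adj a y ∨ C.G.Adj a z :=
    sep b a x y z hbS haS hxS hyS hab_ne (hSSc a haS y hyS) hxy.symm
      (pcov a b x y z cover)
  have haXZ : C.G.Adj a x ∨ C.G.Adj a z :=
    sep b a y x z hbS haS hyS hxS hab_ne (hSSc a haS x hxS) hxy
      (vcov b a x y z (pcov a b x y z cover))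
  have haXY : C.G.Adj a x ∨ C.G.Adj a y :=
    sep b a z x y hbS haS hzS hxS hab_ne (hSSc a haS x hxS) hxz
      (wcov b a x y z (pcov a b x y z cover))
  have hbYZ : C.G.Adj b y ∨ C.G.Adj b z :=
    sep a b x y z haS hbS hxS hyS hab_ne.symm (hSSc b hbS y hyS) hxy.symm
      cover
  have hbXZ : C.G.Adj b x ∨ C.G.Adj b z :=
    sep a b y x z haS hbS hyS hxS hab_ne.symm (hSSc b hbS x hxS) hxy
      (vcov a b x y z cover)
  have hbXY : C.G.Adj b x ∨ C.G.Adj b y :=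
    sep a b z x y haS hbS hzS hxS hab_ne.symm (hSSc b hbS x hxS) hxz
      (wcov a b x y z cover)
  have haTwo : (C.G.Adj a x ∧ C.G.Adj a y) ∨ (C.G.Adj a x ∧ C.G.Adj a z) ∨
      (C.G.Adj a y ∧ C.G.Adj a z) := by
    by_cases hax : C.G.Adj a x
    · rcases haYZ with h | h
      · exact Or.inl ⟨hax, h⟩
      · exact Or.inr (Or.inl ⟨hax, h⟩)
    · exact Or.inr (Or.inr ⟨haXY.resolve_left hax, haXZ.resolve_left hax⟩)
  have hbTwo : (C.G.Adj b x ∧ C.G.Adj b y) ∨ (C.G.Adj b x ∧ C.G.Adj b z) ∨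
      (C.G.Adj b y ∧ C.G.Adj b z) := by
    by_cases hbx : C.G.Adj b x
    · rcases hbYZ with h | h
      · exact Or.inl ⟨hbx, h⟩
      · exact Or.inr (Or.inl ⟨hbx, h⟩)
    · exact Or.inr (Or.inr ⟨hbXY.resolve_left hbx, hbXZ.resolve_left hbx⟩)
  have hX : C.X = crossEdges C.G S := hd
  have hScYXZ : Sᶜ = {y, x, z} := by
    rw [hSc, Set.insert_comm]
  have hScZXY : Sᶜ = {z, x, y} := by
    rw [hSc, Set.pair_comm y z, Set.insert_comm x z]
  have hScYZX : Sᶜ = {y, z, x} := by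
    rw [hSc, Set.insert_comm x y, Set.pair_comm x z]
  rcases haTwo with ⟨hax, hay⟩ | ⟨hax, haz⟩ | ⟨hay, haz⟩ <;>
    rcases hbTwo with ⟨hbx, hby⟩ | ⟨hbx, hbz⟩ | ⟨hby, hbz⟩
  · exact key_lemma C S a b x y z hSab hSc hab hxy' hyz' hxz hax hbx (Or.inl hay) (Or.inl hby) hX
  · exact key_lemma C S a b x y z hSab hSc hab hxy' hyz' hxz hax hbx (Or.inl hay) (Or.inr hbz) hX
  · exact key_lemma C S a b y x z hSab hScYXZ hab hxy'.symm hxz' hyz hay hby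
      (Or.inl hax) (Or.inr hbz) hX
  · exact key_lemma C S a b x y z hSab hSc hab hxy' hyz' hxz hax hbx (Or.inr haz) (Or.inl hby) hX
  · exact key_lemma C S a b x y z hSab hSc hab hxy' hyz' hxz hax hbx (Or.inr haz) (Or.inr hbz) hX
  · exact key_lemma C S a b z x y hSab hScZXY hab hxz'.symm hxy' hyz.symm haz hbz
      (Or.inl hax) (Or.inr hby) hX
  · exact key_lemma C S a b y x z hSab hScYXZ hab hxy'.symm hxz' hyz hay hby
      (Or.inr haz) (Or.inl hbx) hX
  · exact key_lemma C S a b z x y hSab hScZXY hab hxz'.symm hxy' hyz.symm haz hbz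
      (Or.inr hay) (Or.inl hbx) hX
  · exact key_lemma C S a b y z x hSab hScYZX hab hyz' hxz'.symm hxy.symm hay hby
      (Or.inl haz) (Or.inl hbz) hX
end
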